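/- arXiv:2509.24810 — 18 statements merged into one kernel-verified Lean document; each statement's English description precedes it below -/
import Mathlib

section
/- Let B be an arbitrary category. The following are equivalent: (a) B is idempotent complete (every idempotent endomorphism in B splits, i.e. can be written as h ∘ g with g ∘ h = id); (b) every idempotent endomorphism in B has a 0-kernel; (c) every idempotent endomorphism in B has a 0-cokernel. -/
/-!
If an idempotent `e` factors as `e = p ≫ i` with `p` epi and `i` mono, then
`p ≫ (i ≫ p) ≫ i = e ≫ e = e = p ≫ 𝟙 ≫ i`, and cancelling `p` and `i` gives `i ≫ p = 𝟙`,
so the factorization is a splitting of `e`. A `0`-kernel or a `0`-cokernel of `e` yields such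
a factorization, and conversely a splitting `e = p ≫ i`, `i ≫ p = 𝟙` exhibits `i` as a
`0`-kernel and `p` as a `0`-cokernel of `e`.
-/

open CategoryTheory Limits

universe v u

/-- A `0`-kernel of `f : X ⟶ Y` is a monomorphism `g : Z ⟶ Y` such that
`f = g ∘ h` for some split epimorphism `h`. -/
def IsZeroKernel {B : Type u} [Category.{v} B] {X Y Z : B} (f : X ⟶ Y) (g : Z ⟶ Y) : Prop :=
  Mono g ∧ ∃ h : X ⟶ Z, IsSplitEpi h ∧ f = h ≫ g

/-- A `0`-cokernel of `f : X ⟶ Y` is an epimorphism `s : X ⟶ W` such that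
`f = r ∘ s` for some split monomorphism `r`. -/
def IsZeroCokernel {B : Type u} [Category.{v} B] {X Y W : B} (f : X ⟶ Y) (s : X ⟶ W) : Prop :=
  Epi s ∧ ∃ r : W ⟶ Y, IsSplitMono r ∧ f = s ≫ r

section

variable {C : Type u} [Category.{v} C] {X : C} {e : X ⟶ X}

theorem comp_eq_id_of_epi_comp_mono_eq_idem (he : e ≫ e = e) {Y : C} {p : X ⟶ Y} {i : Y ⟶ X}
    [Epi p] [Mono i] (hpi : p ≫ i = e) : i ≫ p = 𝟙 Y := by
  rw [← cancel_epi p, ← cancel_mono i]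
  calc (p ≫ i ≫ p) ≫ i = (p ≫ i) ≫ (p ≫ i) := by simp only [Category.assoc]
    _ = (p ≫ 𝟙 Y) ≫ i := by rw [hpi, he, ← hpi, Category.comp_id]

theorem exists_isZeroKernel_iff_splits (he : e ≫ e = e) :
    (∃ (Z : C) (g : Z ⟶ X), IsZeroKernel e g) ↔
      ∃ (Y : C) (i : Y ⟶ X) (p : X ⟶ Y), i ≫ p = 𝟙 Y ∧ p ≫ i = e := by
  constructor
  · rintro ⟨Z, g, hg, h, hh, rfl⟩
    exact ⟨Z, g, h, comp_eq_id_of_epi_comp_mono_eq_idem he rfl, rfl⟩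
  · rintro ⟨Y, i, p, hip, rfl⟩
    have : IsSplitMono i := .mk' ⟨p, hip⟩
    exact ⟨Y, i, inferInstance, p, .mk' ⟨i, hip⟩, rfl⟩

theorem exists_isZeroCokernel_iff_splits (he : e ≫ e = e) :
    (∃ (W : C) (s : X ⟶ W), IsZeroCokernel e s) ↔
      ∃ (Y : C) (i : Y ⟶ X) (p : X ⟶ Y), i ≫ p = 𝟙 Y ∧ p ≫ i = e := by
  constructor
  · rintro ⟨W, s, hs, r, hr, rfl⟩
    exact ⟨W, r, s, comp_eq_id_of_epi_comp_mono_eq_idem he rfl, rfl⟩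
  · rintro ⟨Y, i, p, hip, rfl⟩
    have : IsSplitEpi p := .mk' ⟨i, hip⟩
    exact ⟨Y, p, inferInstance, i, .mk' ⟨p, hip⟩, rfl⟩

end

theorem stmt0 (B : Type u) [Category.{v} B] :
    (IsIdempotentComplete B ↔
      ∀ (X : B) (e : X ⟶ X), e ≫ e = e → ∃ (Z : B) (g : Z ⟶ X), IsZeroKernel e g) ∧
    (IsIdempotentComplete B ↔
      ∀ (X : B) (e : X ⟶ X), e ≫ e = e → ∃ (W : B) (s : X ⟶ W), IsZeroCokernel e s) := by
  have complete_iff : IsIdempotentComplete B ↔ ∀ (X : B) (e : X ⟶ X), e ≫ e = e →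
      ∃ (Y : B) (i : Y ⟶ X) (p : X ⟶ Y), i ≫ p = 𝟙 Y ∧ p ≫ i = e :=
    ⟨fun h => h.idempotents_split, fun h => ⟨h⟩⟩
  rw [complete_iff]
  exact ⟨forall_congr' fun X => forall_congr' fun e => forall_congr' fun he =>
      (exists_isZeroKernel_iff_splits he).symm,
    forall_congr' fun X => forall_congr' fun e => forall_congr' fun he =>
      (exists_isZeroCokernel_iff_splits he).symm⟩
end

section
/- Let B be an arbitrary category, and let f : X ⟶ Y and g : Z ⟶ Y be morphisms in B. Then g is a 0-kernel of f if and only if the following two conditions hold: (a) there exists a morphism g' : Z ⟶ X with g = f ∘ g'; and (b) whenever w : W ⟶ Y is a morphism such that w = f ∘ w' for some w' : W ⟶ X, there exists a unique morphism u : W ⟶ Z with w = g ∘ u. -/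
/-!
If `f = h ≫ g` with `s ≫ h = 𝟙`, then `g = s ≫ f` factors through `f`, and a morphism `w' ≫ f`
lifts along `g` as `w' ≫ h`, uniquely because `g` is mono. Conversely, uniqueness of lifts along `g`
of morphisms factoring through `f` makes `g` mono (since `g` itself factors through `f`), and the lift
`h` of `f` itself satisfies `f = h ≫ g`, with the factorisation `g = g' ≫ f` giving the section
`g'` of `h` after cancelling `g`.
-/

open CategoryTheory Limits

universe v u

namespace IsZeroKernel

variable {B : Type u} [Category.{v} B] {X Y Z : B} {f : X ⟶ Y} {g : Z ⟶ Y}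

theorem exists_eq_comp (hk : IsZeroKernel f g) : ∃ g' : Z ⟶ X, g = g' ≫ f := by
  obtain ⟨-, h, ⟨⟨s, hs⟩⟩, rfl⟩ := hk
  exact ⟨s, by rw [← Category.assoc, hs, Category.id_comp]⟩

theorem existsUnique_lift (hk : IsZeroKernel f g) {W : B} (w' : W ⟶ X) :
    ∃! u : W ⟶ Z, w' ≫ f = u ≫ g := by
  obtain ⟨hg, h, -, rfl⟩ := hk
  refine ⟨w' ≫ h, (Category.assoc _ _ _).symm, fun u hu => ?_⟩
  exact hg.right_cancellation _ _ (by rw [← hu, Category.assoc])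

end IsZeroKernel

section Converse

variable {B : Type u} [Category.{v} B] {X Y Z : B} {f : X ⟶ Y} {g : Z ⟶ Y}

theorem mono_of_existsUnique_lift {g' : Z ⟶ X} (hg' : g = g' ≫ f)
    (hlift : ∀ (W : B) (w' : W ⟶ X), ∃! u : W ⟶ Z, w' ≫ f = u ≫ g) : Mono g where
  right_cancellation {W} a b hab := by
    obtain ⟨u, -, hu⟩ := hlift W (a ≫ g')
    have hlift_a : (a ≫ g') ≫ f = a ≫ g := by rw [Category.assoc, ← hg']
    exact (hu a hlift_a).trans (hu b (hlift_a.trans hab)).symm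

theorem isZeroKernel_of_existsUnique_lift {g' : Z ⟶ X} (hg' : g = g' ≫ f)
    (hlift : ∀ (W : B) (w' : W ⟶ X), ∃! u : W ⟶ Z, w' ≫ f = u ≫ g) : IsZeroKernel f g := by
  have hg : Mono g := mono_of_existsUnique_lift hg' hlift
  obtain ⟨h, hh, -⟩ := hlift X (𝟙 X)
  rw [Category.id_comp] at hh
  have hsection : g' ≫ h = 𝟙 Z :=
    hg.right_cancellation _ _ (by rw [Category.assoc, ← hh, ← hg', Category.id_comp])
  exact ⟨hg, h, ⟨⟨g', hsection⟩⟩, hh⟩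

end Converse

theorem stmt1 {B : Type u} [Category.{v} B] {X Y Z : B} (f : X ⟶ Y) (g : Z ⟶ Y) :
    IsZeroKernel f g ↔
      (∃ g' : Z ⟶ X, g = g' ≫ f) ∧
      (∀ (W : B) (w : W ⟶ Y), (∃ w' : W ⟶ X, w = w' ≫ f) →
        ∃! u : W ⟶ Z, w = u ≫ g) := by
  constructor
  · intro hk
    refine ⟨hk.exists_eq_comp, ?_⟩
    rintro W w ⟨w', rfl⟩
    exact hk.existsUnique_lift w'
  · rintro ⟨⟨g', hg'⟩, hlift⟩
    exact isZeroKernel_of_existsUnique_lift hg' fun W w' => hlift W _ ⟨w', rfl⟩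
end

section
/- Let C be a preadditive category that has 0-kernels (every morphism of C has a 0-kernel). Then every morphism f of C has a kernel; moreover, every kernel of a morphism of C is a split monomorphism. -/
open CategoryTheory Limits

universe v u

/-- A category has `0`-kernels if every morphism has a `0`-kernel. -/
def HasZeroKernels (B : Type u) [Category.{v} B] : Prop :=
  ∀ {X Y : B} (f : X ⟶ Y), ∃ (Z : B) (g : Z ⟶ Y), IsZeroKernel f g

/-!
A `0`-kernel `e = p ≫ m` of an idempotent `e` splits it: cancelling `p` and `m` in
`p ≫ (m ≫ p) ≫ m = p ≫ m` gives `m ≫ p = 𝟙`, so the category is idempotent complete.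
Writing `f = φ ≫ g` with `g` mono and `φ` split epi, the kernels of `f` are those of `φ`.
These are the kernels of the idempotent `φ ≫ section_ φ`, so they exist, and by the splitting
lemma for split epimorphisms in preadditive categories they are split monomorphisms.
-/

theorem HasZeroKernels.isIdempotentComplete {C : Type u} [Category.{v} C]
    (h : HasZeroKernels C) : IsIdempotentComplete C := by
  refine ⟨fun X e he => ?_⟩
  obtain ⟨Y, m, hm, p, hp, rfl⟩ := h e
  refine ⟨Y, m, p, ?_, rfl⟩
  rw [← cancel_mono m, ← cancel_epi p]
  simpa using he

section Preadditive

variable {C : Type u} [Category.{v} C] [Preadditive C] {X Y : C}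

theorem hasKernel_of_isSplitEpi [IsIdempotentComplete C] (φ : X ⟶ Y) [IsSplitEpi φ] :
    HasKernel φ := by
  have he : (φ ≫ section_ φ) ≫ φ ≫ section_ φ = φ ≫ section_ φ := by simp
  have : HasKernel (φ ≫ section_ φ) :=
    (Idempotents.isIdempotentComplete_iff_idempotents_have_kernels C).1 ‹_› X _ he
  have hι : kernel.ι (φ ≫ section_ φ) ≫ φ = 0 := by
    simpa only [Category.assoc, IsSplitEpi.id, Category.comp_id, zero_comp] using
      kernel.condition (φ ≫ section_ φ) =≫ φ
  exact ⟨⟨⟨_, isKernelOfComp (section_ φ) _ (kernelIsKernel _) hι rfl⟩⟩⟩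

theorem isSplitMono_ι_of_isLimit_of_isSplitEpi {φ : X ⟶ Y} [IsSplitEpi φ] {c : KernelFork φ}
    (hc : IsLimit c) : IsSplitMono c.ι :=
  ⟨⟨⟨_, (binaryBiconeOfIsSplitEpiOfKernel hc).inl_fst⟩⟩⟩

end Preadditive

theorem stmt2 {C : Type u} [Category.{v} C] [Preadditive C] (h : HasZeroKernels C) :
    HasKernels C ∧
      ∀ {K X Y : C} (f : X ⟶ Y) (k : K ⟶ X) (w : k ≫ f = 0),
        IsLimit (KernelFork.ofι k w) → IsSplitMono k := by
  have := h.isIdempotentComplete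
  refine ⟨⟨fun {X Y} f => ?_⟩, fun {K X Y} f k w hk => ?_⟩
  · obtain ⟨Z, g, hg, φ, hφ, rfl⟩ := h f
    have := hasKernel_of_isSplitEpi φ
    infer_instance
  · obtain ⟨Z, g, hg, φ, hφ, rfl⟩ := h f
    have hkφ : k ≫ φ = 0 := by rw [← cancel_mono g]; simpa using w
    exact isSplitMono_ι_of_isLimit_of_isSplitEpi (isKernelOfComp g _ hk hkφ rfl)
end

section
/- Let C be a 0-abelian category and let B be a full subcategory of C that contains a zero object and is closed under binary biproducts and under retracts (direct summands). Then B is a 0-abelian category; in particular B has 0-kernels and 0-cokernels. -/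
open CategoryTheory Limits

universe v u

/-- A category has `0`-cokernels if every morphism has a `0`-cokernel. -/
def HasZeroCokernels (B : Type u) [Category.{v} B] : Prop :=
  ∀ {X Y : B} (f : X ⟶ Y), ∃ (W : B) (s : X ⟶ W), IsZeroCokernel f s

attribute [local instance] CategoryTheory.Limits.hasBinaryBiproducts_of_finite_biproducts

/-!
The object through which a `0`-kernel of `f : X ⟶ Y` factors is a retract of `X` (the split
epimorphism has a section), dually for `0`-cokernels, so both lie in the subcategory; the
fully faithful inclusion then reflects the `0`-kernel and `0`-cokernel conditions. Finite
biproducts in the subcategory come from its finite products, which it inherits from the zero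
object and binary biproducts of `C`.
-/

namespace CategoryTheory

variable {C : Type u} [Category.{v} C]

section ReflectFullyFaithful

variable {D : Type*} [Category* D] (F : D ⥤ C) [F.Full] [F.Faithful]

lemma Functor.isZeroKernel_of_map {X Y Z : D} {f : X ⟶ Y} {g : Z ⟶ Y}
    (hg : IsZeroKernel (F.map f) (F.map g)) : IsZeroKernel f g := by
  obtain ⟨hmono, h, hsplit, hfac⟩ := hg
  refine ⟨F.mono_of_mono_map hmono, F.preimage h, ?_, F.map_injective ?_⟩
  · rwa [← F.isSplitEpi_iff, F.map_preimage]
  · rw [F.map_comp, F.map_preimage, hfac]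

lemma Functor.isZeroCokernel_of_map {X Y W : D} {f : X ⟶ Y} {s : X ⟶ W}
    (hs : IsZeroCokernel (F.map f) (F.map s)) : IsZeroCokernel f s := by
  obtain ⟨hepi, r, hsplit, hfac⟩ := hs
  refine ⟨F.epi_of_epi_map hepi, F.preimage r, ?_, F.map_injective ?_⟩
  · rwa [← F.isSplitMono_iff, F.map_preimage]
  · rw [F.map_comp, F.map_preimage, hfac]

end ReflectFullyFaithful

namespace ObjectProperty

variable (P : ObjectProperty C)

section Retracts

variable [P.IsStableUnderRetracts]

lemma hasZeroKernels_fullSubcategory (hC : HasZeroKernels C) :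
    HasZeroKernels P.FullSubcategory := by
  intro X Y f
  obtain ⟨Z, g, hker⟩ := hC f.hom
  have hZ : P Z := by
    obtain ⟨-, h, _, -⟩ := hker
    exact P.prop_of_retract ⟨section_ h, h, IsSplitEpi.id h⟩ X.property
  exact ⟨⟨Z, hZ⟩, P.homMk g, P.ι.isZeroKernel_of_map hker⟩

lemma hasZeroCokernels_fullSubcategory (hC : HasZeroCokernels C) :
    HasZeroCokernels P.FullSubcategory := by
  intro X Y f
  obtain ⟨W, s, hcoker⟩ := hC f.hom
  have hW : P W := by
    obtain ⟨-, r, _, -⟩ := hcoker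
    exact P.prop_of_retract ⟨r, retraction r, IsSplitMono.id r⟩ Y.property
  exact ⟨⟨W, hW⟩, P.homMk s, P.ι.isZeroCokernel_of_map hcoker⟩

end Retracts

variable {P} in
lemma IsClosedUnderBinaryProducts.of_biprod [HasZeroMorphisms C] [HasBinaryBiproducts C]
    [P.IsClosedUnderIsomorphisms] (h : ∀ X Y, P X → P Y → P (X ⊞ Y)) :
    P.IsClosedUnderBinaryProducts :=
  IsClosedUnderLimitsOfShape.mk' <| by
    rintro _ ⟨F, hF⟩
    exact P.prop_of_iso (biprod.isoProd _ _ ≪≫ HasLimit.isoOfNatIso (diagramIsoPair F).symm)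
      (h _ _ (hF _) (hF _))

lemma hasFiniteBiproducts_fullSubcategory [Preadditive C] [HasFiniteBiproducts C]
    [P.ContainsZero] [P.IsClosedUnderIsomorphisms] (h : ∀ X Y, P X → P Y → P (X ⊞ Y)) :
    HasFiniteBiproducts P.FullSubcategory := by
  have := IsClosedUnderBinaryProducts.of_biprod h
  have := IsClosedUnderFiniteProducts.mk' (P := P)
  exact HasFiniteBiproducts.of_hasFiniteProducts

end ObjectProperty

end CategoryTheory

/-- A full subcategory (closed under the relevant structure) of a `0`-abelian category, i.e.
an additive category with `0`-kernels and `0`-cokernels, is again `0`-abelian. -/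
theorem stmt3 {C : Type u} [Category.{v} C] [Preadditive C] [HasFiniteBiproducts C]
    (h0k : HasZeroKernels C) (h0c : HasZeroCokernels C)
    (P : C → Prop)
    (hzero : ∃ Z : C, P Z ∧ IsZero Z)
    (hbiprod : ∀ A B : C, P A → P B → P (A ⊞ B))
    (hretract : ∀ A B : C, P B → ∀ (s : A ⟶ B) (r : B ⟶ A), s ≫ r = 𝟙 A → P A) :
    HasZeroObject (ObjectProperty.FullSubcategory P) ∧ HasFiniteBiproducts (ObjectProperty.FullSubcategory P) ∧
      HasZeroKernels (ObjectProperty.FullSubcategory P) ∧ HasZeroCokernels (ObjectProperty.FullSubcategory P) := by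
  have : ObjectProperty.ContainsZero P :=
    ⟨let ⟨Z, hPZ, hZ⟩ := hzero; ⟨Z, hZ, hPZ⟩⟩
  have : ObjectProperty.IsStableUnderRetracts P :=
    ⟨fun e hY => hretract _ _ hY e.i e.r e.retract⟩
  exact ⟨inferInstance, ObjectProperty.hasFiniteBiproducts_fullSubcategory P hbiprod,
    ObjectProperty.hasZeroKernels_fullSubcategory P h0k,
    ObjectProperty.hasZeroCokernels_fullSubcategory P h0c⟩
end

section
/- Let C be an additive, idempotent complete category. Then the following are equivalent: (a) C has 0-kernels, has 0-cokernels, and every bimorphism in C is an isomorphism; (b) C is von Neumann regular, i.e. every morphism f : X ⟶ Y in C admits a morphism g : Y ⟶ X with f ∘ g ∘ f = f. -/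
/-! If `f = h ≫ m` with `h` split epi and `m` mono, and `m = s ≫ r` with `r` split mono and
`s` epi, then `s` is also mono, hence invertible, and `retraction r ≫ s⁻¹ ≫ section_ h` is a weak
inverse of `f`. Conversely, if `f ≫ g ≫ f = f`, then `f ≫ g` and `g ≫ f` are idempotents; writing
`f ≫ g = e ≫ i` with `i ≫ e = 𝟙`, the morphism `i ≫ f` is split mono and `f = e ≫ (i ≫ f)` is a
`0`-kernel, dually for `0`-cokernels, and a bimorphism `f` is inverted by `g`. -/

open CategoryTheory Limits

universe v u

section

variable {C : Type u} [Category.{v} C]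

lemma exists_comp_comp_eq_self_of_eq_comp_comp {X Y Z W : C} {f : X ⟶ Y} {h : X ⟶ Z}
    {s : Z ⟶ W} {r : W ⟶ Y} [IsSplitEpi h] [IsIso s] [IsSplitMono r] (hf : f = h ≫ s ≫ r) :
    ∃ g : Y ⟶ X, f ≫ g ≫ f = f :=
  ⟨retraction r ≫ inv s ≫ section_ h, by subst hf; simp⟩

lemma exists_comp_comp_eq_self_of_hasZeroKernels_of_hasZeroCokernels
    (hk : HasZeroKernels C) (hc : HasZeroCokernels C)
    (hbi : ∀ {X Y : C} (f : X ⟶ Y), Mono f → Epi f → IsIso f) {X Y : C} (f : X ⟶ Y) :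
    ∃ g : Y ⟶ X, f ≫ g ≫ f = f := by
  obtain ⟨Z, m, hm, h, hh, rfl⟩ := hk f
  obtain ⟨W, s, hs, r, hr, rfl⟩ := hc m
  have : Mono s := mono_of_mono s r
  have : IsIso s := hbi s this hs
  exact exists_comp_comp_eq_self_of_eq_comp_comp rfl

variable {X Y : C} {f : X ⟶ Y} {g : Y ⟶ X}

lemma isZeroKernel_of_comp_comp_eq_self (hfg : f ≫ g ≫ f = f) {Z : C} {i : Z ⟶ X}
    {e : X ⟶ Z} (hie : i ≫ e = 𝟙 Z) (hei : e ≫ i = f ≫ g) : IsZeroKernel f (i ≫ f) := by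
  have hsplit : (i ≫ f) ≫ g ≫ e = 𝟙 Z := by
    rw [Category.assoc, ← Category.assoc f, ← hei]; simp [hie]
  refine ⟨(⟨⟨⟨g ≫ e, hsplit⟩⟩⟩ : IsSplitMono (i ≫ f)).mono, e, ⟨⟨⟨i, hie⟩⟩⟩, ?_⟩
  rw [← Category.assoc, hei, Category.assoc, hfg]

lemma isZeroCokernel_of_comp_comp_eq_self (hfg : f ≫ g ≫ f = f) {W : C} {i : W ⟶ Y}
    {e : Y ⟶ W} (hie : i ≫ e = 𝟙 W) (hei : e ≫ i = g ≫ f) : IsZeroCokernel f (f ≫ e) := by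
  have hsplit : (i ≫ g) ≫ f ≫ e = 𝟙 W := by
    rw [Category.assoc, ← Category.assoc g, ← hei]; simp [hie]
  refine ⟨(⟨⟨⟨i ≫ g, hsplit⟩⟩⟩ : IsSplitEpi (f ≫ e)).epi, i, ⟨⟨⟨e, hie⟩⟩⟩, ?_⟩
  rw [Category.assoc, hei, hfg]

lemma isIso_of_comp_comp_eq_self [Mono f] [Epi f] (hfg : f ≫ g ≫ f = f) : IsIso f :=
  ⟨g, (cancel_mono f).mp (by simp [hfg]), (cancel_epi f).mp (by simp [hfg])⟩

lemma hasZeroKernels_of_exists_comp_comp_eq_self (hic : IsIdempotentComplete C)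
    (hreg : ∀ {X Y : C} (f : X ⟶ Y), ∃ g : Y ⟶ X, f ≫ g ≫ f = f) :
    HasZeroKernels C := fun f ↦ by
  obtain ⟨g, hfg⟩ := hreg f
  obtain ⟨Z, i, e, hie, hei⟩ := hic.idempotents_split _ (f ≫ g) (by simp [reassoc_of% hfg])
  exact ⟨Z, i ≫ f, isZeroKernel_of_comp_comp_eq_self hfg hie hei⟩

lemma hasZeroCokernels_of_exists_comp_comp_eq_self (hic : IsIdempotentComplete C)
    (hreg : ∀ {X Y : C} (f : X ⟶ Y), ∃ g : Y ⟶ X, f ≫ g ≫ f = f) :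
    HasZeroCokernels C := fun f ↦ by
  obtain ⟨g, hfg⟩ := hreg f
  obtain ⟨W, i, e, hie, hei⟩ := hic.idempotents_split _ (g ≫ f) (by simp [hfg])
  exact ⟨W, f ≫ e, isZeroCokernel_of_comp_comp_eq_self hfg hie hei⟩

end

theorem stmt4_general {C : Type u} [Category.{v} C]
    (hic : IsIdempotentComplete C) :
    (HasZeroKernels C ∧ HasZeroCokernels C ∧
      ∀ {X Y : C} (f : X ⟶ Y), Mono f → Epi f → IsIso f) ↔
    (∀ {X Y : C} (f : X ⟶ Y), ∃ g : Y ⟶ X, f ≫ g ≫ f = f) := by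
  constructor
  · rintro ⟨hk, hc, hbi⟩
    exact exists_comp_comp_eq_self_of_hasZeroKernels_of_hasZeroCokernels hk hc hbi
  · intro hreg
    refine ⟨hasZeroKernels_of_exists_comp_comp_eq_self hic hreg,
      hasZeroCokernels_of_exists_comp_comp_eq_self hic hreg, fun f _ _ ↦ ?_⟩
    obtain ⟨g, hfg⟩ := hreg f
    exact isIso_of_comp_comp_eq_self hfg

theorem stmt4 {C : Type u} [Category.{v} C] [Preadditive C] [HasFiniteBiproducts C]
    (hic : IsIdempotentComplete C) :
    (HasZeroKernels C ∧ HasZeroCokernels C ∧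
      ∀ {X Y : C} (f : X ⟶ Y), Mono f → Epi f → IsIso f) ↔
    (∀ {X Y : C} (f : X ⟶ Y), ∃ g : Y ⟶ X, f ≫ g ≫ f = f) :=
  stmt4_general hic
end

section
/- Let C be a preadditive category. Then every morphism of C factors as an epimorphism followed by a monomorphism if and only if for every morphism f : X ⟶ Y of C there is a short exact sequence 0 → F_e → mr(f) → F₁ → 0 in Cᵒᵖ ⥤ AddCommGrp such that: (i) for every object W of C, every morphism F_e ⟶ y(W) is zero; and (ii) there exists a morphism g : Z ⟶ Y in C such that y(g) is a kernel of the composite y(Y) → mr(f) → F₁ (where y(Y) → mr(f) is the canonical cokernel projection). -/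
/-!
Write `y` for the additive Yoneda embedding. If `f = e ≫ m` with `e` epi and `m` mono, the
sequence `coker y(e) → coker y(f) → coker y(m)` is short exact (the cokernel half of the
kernel–cokernel sequence of a composite, whose connecting map vanishes as `y(m)` is mono), and
`y(m)` is the kernel of `y(Y) → coker y(m)`. Conversely, given such data, `g` is mono and `f`
factors as `e ≫ g`; since `y(g)` is the kernel of the epimorphism `y(Y) → mr(f) → F₁`, the
latter is the cokernel of `y(g)`, which identifies `F_e` with `coker y(e)`. Finally a morphism
`e` is epi exactly when `coker y(e)` admits no nonzero morphism to a representable functor.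
-/

open CategoryTheory Limits

universe v u

section Abelian

variable {𝒜 : Type*} [Category 𝒜] [Abelian 𝒜] {P Q R : 𝒜} {a : P ⟶ Q} {b : Q ⟶ R} {c : P ⟶ R}

noncomputable abbrev cokernelCompShortComplex (h : a ≫ b = c) : ShortComplex 𝒜 :=
  ShortComplex.mk (cokernel.map a c (𝟙 P) b (by simp [h]))
    (cokernel.map c b a (𝟙 R) (by simp [h])) (by ext; simp)

lemma cokernelCompShortComplex_shortExact (h : a ≫ b = c) [Mono b] :
    (cokernelCompShortComplex h).ShortExact := by
  subst h
  let L := kernelCokernelCompSequence.snakeInput a b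
  have hmono : Mono L.L₃.f := L.L₂'_exact.mono_g
    (((Preadditive.mono_iff_isZero_kernel b).1 inferInstance).eq_of_src _ _)
  have : Epi L.L₂.g := by dsimp [L, kernelCokernelCompSequence.snakeInput]; infer_instance
  exact .mk' L.L₃_exact hmono L.epi_L₃_g

/-- `π ≫ p` is an epimorphism with kernel `b`, hence a cokernel of `b`; so `p` is the canonical
map `coker c ⟶ coker b` up to an isomorphism of the target, and `F` and `coker a` are both its
kernel. -/
noncomputable def cokernelIsoOfShortExact {F G : 𝒜} (h : a ≫ b = c) {i : F ⟶ cokernel c}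
    {p : cokernel c ⟶ G} {w : i ≫ p = 0} (hS : (ShortComplex.mk i p w).ShortExact)
    {wb : b ≫ cokernel.π c ≫ p = 0} (hb : IsLimit (KernelFork.ofι b wb)) : cokernel a ≅ F :=
  have : Mono b := mono_of_isLimit_fork hb
  have : Epi p := hS.epi_g
  let σ := IsColimit.coconePointUniqueUpToIso (cokernelIsCokernel b)
    (Abelian.epiIsCokernelOfKernel _ hb)
  have hσ : p = (cokernelCompShortComplex h).g ≫ σ.hom := by
    rw [← cancel_epi (cokernel.π c)]
    simp only [cokernel.π_desc_assoc, Category.id_comp]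
    exact (IsColimit.comp_coconePointUniqueUpToIso_hom (cokernelIsCokernel b)
      (Abelian.epiIsCokernelOfKernel _ hb) WalkingParallelPair.one).symm
  IsLimit.conePointUniqueUpToIso
    (isKernelCompMono (cokernelCompShortComplex_shortExact h).fIsKernel σ.hom hσ) hS.fIsKernel

end Abelian

section Yoneda

variable {C : Type u} [Category.{v} C] [Preadditive C]

instance preadditiveYoneda_map_mono {Z Y : C} (m : Z ⟶ Y) [Mono m] :
    Mono (preadditiveYoneda.map m) :=
  (NatTrans.mono_iff_mono_app _).2 fun _ =>
    (AddCommGrpCat.mono_iff_injective _).2 fun _ _ h => (cancel_mono m).1 h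

lemma epi_iff_forall_cokernel_preadditiveYoneda_map_to_eq_zero {X Z : C} (e : X ⟶ Z) :
    Epi e ↔ ∀ (W : C) (α : cokernel (preadditiveYoneda.map e) ⟶ preadditiveYoneda.obj W),
      α = 0 := by
  rw [Preadditive.epi_iff_cancel_zero]
  constructor
  · intro he W α
    have hh : e ≫ preadditiveYoneda.preimage (cokernel.π _ ≫ α) = 0 :=
      preadditiveYoneda.map_injective (by simp)
    rw [← cancel_epi (cokernel.π _), comp_zero,
      ← preadditiveYoneda.map_preimage (cokernel.π _ ≫ α), he W _ hh, Functor.map_zero]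
  · intro hW W h hh
    apply preadditiveYoneda.map_injective
    have hπ : preadditiveYoneda.map e ≫ preadditiveYoneda.map h = 0 := by
      rw [← Functor.map_comp, hh, Functor.map_zero]
    rw [← cokernel.π_desc _ _ hπ, hW W (cokernel.desc _ _ hπ), comp_zero, Functor.map_zero]

end Yoneda

theorem stmt6 {C : Type u} [Category.{v} C] [Preadditive C] :
    (∀ {X Y : C} (f : X ⟶ Y), ∃ (Z : C) (e : X ⟶ Z) (m : Z ⟶ Y),
        Epi e ∧ Mono m ∧ f = e ≫ m) ↔
    (∀ {X Y : C} (f : X ⟶ Y),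
      ∃ (Fe F₁ : Cᵒᵖ ⥤ AddCommGrpCat.{v}) (i : Fe ⟶ cokernel (preadditiveYoneda.map f))
        (p : cokernel (preadditiveYoneda.map f) ⟶ F₁) (w : i ≫ p = 0),
        (ShortComplex.mk i p w).ShortExact ∧
        (∀ (W : C) (α : Fe ⟶ preadditiveYoneda.obj W), α = 0) ∧
        (∃ (Z : C) (g : Z ⟶ Y)
            (wg : preadditiveYoneda.map g ≫ (cokernel.π (preadditiveYoneda.map f) ≫ p) = 0),
          Nonempty (IsLimit (KernelFork.ofι (preadditiveYoneda.map g) wg)))) := by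
  constructor
  · intro H X Y f
    obtain ⟨Z, e, m, he, hm, rfl⟩ := H f
    have hcomp := (preadditiveYoneda.map_comp e m).symm
    let S := cokernelCompShortComplex hcomp
    refine ⟨_, _, S.f, S.g, S.zero, cokernelCompShortComplex_shortExact hcomp,
      (epi_iff_forall_cokernel_preadditiveYoneda_map_to_eq_zero e).1 he, Z, m, by simp [S],
      ⟨isKernelCompMono (Abelian.monoIsKernelOfCokernel _ (cokernelIsCokernel _)) (𝟙 _)
        (by simp [S])⟩⟩
  · intro H X Y f
    obtain ⟨Fe, F₁, i, p, w, hS, hFe, Z, g, wg, ⟨hg⟩⟩ := H f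
    have hgm : Mono g := preadditiveYoneda.mono_of_mono_map (mono_of_isLimit_fork hg)
    obtain ⟨l, hl⟩ := KernelFork.IsLimit.lift' hg (preadditiveYoneda.map f) (by simp)
    have hf : preadditiveYoneda.map (preadditiveYoneda.preimage l) ≫ preadditiveYoneda.map g =
        preadditiveYoneda.map f := by simpa using hl
    refine ⟨Z, preadditiveYoneda.preimage l, g, ?_, hgm,
      preadditiveYoneda.map_injective (by simpa using hf.symm)⟩
    let σ := cokernelIsoOfShortExact hf hS hg
    refine (epi_iff_forall_cokernel_preadditiveYoneda_map_to_eq_zero _).2 fun W α => ?_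
    rw [← σ.hom_inv_id_assoc α, hFe W (σ.inv ≫ α), comp_zero]
end

section
/- Let C be an abelian category, let f : X ⟶ Y be an epimorphism in C and let g : Z ⟶ W be a monomorphism in C. Then every morphism mr(f) ⟶ mr(g) in the functor category Cᵒᵖ ⥤ AddCommGrp is zero. -/
/-!
Representables are projective, so `cokernel.π (y f) ≫ α` lifts to `y w ≫ cokernel.π (y g)` for some
`w : Y ⟶ W`. Then `y (f ≫ w)` is killed by `cokernel.π (y g)`, and since `y g` is a mono in an
abelian category it is the kernel of its cokernel: `f ≫ w` factors through `g`. This square has the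
epi `f` opposite the mono `g`; epis in an abelian category are strong, so `w` itself factors through
`g`, and hence `y w ≫ cokernel.π (y g) = 0`.
-/

open CategoryTheory Limits Opposite

universe v u

namespace CategoryTheory

section Preadditive

variable {C : Type u} [Category.{v} C] [Preadditive C]

instance preadditiveYoneda_map_mono {Z W : C} (g : Z ⟶ W) [Mono g] :
    Mono (preadditiveYoneda.map g) :=
  have (A : Cᵒᵖ) : Mono ((preadditiveYoneda.map g).app A) :=
    (AddCommGrpCat.mono_iff_injective _).2 fun _ _ h => (cancel_mono g).1 h
  NatTrans.mono_of_mono_app _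

theorem preadditiveYoneda_obj_hom_ext {Y : C} {F : Cᵒᵖ ⥤ AddCommGrpCat.{v}}
    {β γ : preadditiveYoneda.obj Y ⟶ F} (h : β.app (op Y) (𝟙 Y) = γ.app (op Y) (𝟙 Y)) :
    β = γ := by
  ext A x
  have hβ := NatTrans.naturality_apply β x.op (𝟙 Y)
  have hγ := NatTrans.naturality_apply γ x.op (𝟙 Y)
  have hx : (preadditiveYoneda.obj Y).map x.op (𝟙 Y) = x := Category.comp_id (X := unop A) _
  rw [hx] at hβ hγ
  rw [hβ, hγ, h]

theorem exists_eq_preadditiveYoneda_map_comp_of_epi {Y W : C} {G : Cᵒᵖ ⥤ AddCommGrpCat.{v}}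
    (p : preadditiveYoneda.obj W ⟶ G) [Epi p] (β : preadditiveYoneda.obj Y ⟶ G) :
    ∃ w : Y ⟶ W, β = preadditiveYoneda.map w ≫ p := by
  obtain ⟨(w : Y ⟶ W), hw⟩ := (AddCommGrpCat.epi_iff_surjective _).1
    ((NatTrans.epi_iff_epi_app p).1 ‹_› (op Y)) (β.app (op Y) (𝟙 Y))
  refine ⟨w, preadditiveYoneda_obj_hom_ext ?_⟩
  rw [← hw]
  exact congrArg _ (Category.id_comp w).symm

end Preadditive

section Abelian

variable {C : Type u} [Category.{v} C] [Abelian C]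

theorem exists_comp_eq_of_preadditiveYoneda_map_comp_cokernel_π_eq_zero {V Z W : C}
    (g : Z ⟶ W) [Mono g] (h : V ⟶ W)
    (hh : preadditiveYoneda.map h ≫ cokernel.π (preadditiveYoneda.map g) = 0) :
    ∃ u : V ⟶ Z, u ≫ g = h := by
  obtain ⟨u, hu⟩ := preadditiveYoneda.map_surjective
    (Abelian.monoLift (preadditiveYoneda.map g) (preadditiveYoneda.map h) hh)
  refine ⟨u, preadditiveYoneda.map_injective ?_⟩
  rw [preadditiveYoneda.map_comp, hu, Abelian.monoLift_comp]

end Abelian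

end CategoryTheory

theorem stmt7 {C : Type u} [Category.{v} C] [Abelian C] {X Y Z W : C}
    (f : X ⟶ Y) (g : Z ⟶ W) (hf : Epi f) (hg : Mono g)
    (α : cokernel (preadditiveYoneda.map f) ⟶ cokernel (preadditiveYoneda.map g)) :
    α = 0 := by
  have : StrongEpi f := strongEpi_of_epi f
  rw [← cancel_epi (cokernel.π (preadditiveYoneda.map f)), comp_zero]
  obtain ⟨w, hw⟩ := exists_eq_preadditiveYoneda_map_comp_of_epi
    (cokernel.π (preadditiveYoneda.map g)) (cokernel.π (preadditiveYoneda.map f) ≫ α)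
  obtain ⟨u, hu⟩ := exists_comp_eq_of_preadditiveYoneda_map_comp_cokernel_π_eq_zero g (f ≫ w)
    (by rw [preadditiveYoneda.map_comp, Category.assoc, ← hw, cokernel.condition_assoc, zero_comp])
  have sq : CommSq u f g w := ⟨hu⟩
  rw [hw, ← sq.fac_right, preadditiveYoneda.map_comp, Category.assoc, cokernel.condition,
    comp_zero]
end

section
/- Let C be a 0-abelian category. Then for every morphism f : X ⟶ Y of C there exist a bimorphism g : X' ⟶ Y' in C and an object Z of C such that mr(f) is isomorphic to the biproduct mr(g) ⊕ y(Z) in the functor category Cᵒᵖ ⥤ AddCommGrp. -/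
open CategoryTheory Limits

universe v u

/-!
Factor `f = (h ≫ g) ≫ r` with `h` a split epimorphism, `g` a monomorphism and `r` a split
monomorphism; `g` is also epi because `h ≫ g` is the `0`-cokernel of `f`. A `0`-kernel of an
idempotent splits it, so `r` is the inclusion of a biproduct summand `Y ≅ W ⊞ Z`. Under the
Yoneda embedding, precomposing with the epimorphism `y(h)` leaves the cokernel unchanged, and the
cokernel of `y(g)` followed by the inclusion `y(W) ⟶ y(W) ⊞ y(Z)` is `mr(g) ⊞ y(Z)`.
-/

instance CategoryTheory.additive_preadditiveYoneda {C : Type*} [Category C] [Preadditive C] :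
    (preadditiveYoneda : C ⥤ Cᵒᵖ ⥤ AddCommGrpCat).Additive where
  map_add {_ _ f g} := by
    ext
    exact Preadditive.comp_add _ _ _ _ _ _

theorem isIdempotentComplete_of_hasZeroKernels {C : Type u} [Category.{v} C]
    (hC : HasZeroKernels C) : IsIdempotentComplete C := by
  refine ⟨fun Y p hp => ?_⟩
  obtain ⟨Z, g, hg, h, hh, rfl⟩ := hC p
  refine ⟨Z, g, h, ?_, rfl⟩
  rw [← cancel_epi h, ← cancel_mono g]
  simpa only [Category.assoc, Category.id_comp] using hp

theorem CategoryTheory.IsSplitMono.exists_comp_iso_eq_biprod_inl {C : Type*} [Category C]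
    [Preadditive C] [IsIdempotentComplete C] [HasBinaryBiproducts C] {W Y : C} (r : W ⟶ Y)
    [IsSplitMono r] : ∃ (Z : C) (e : Y ≅ W ⊞ Z), r ≫ e.hom = biprod.inl := by
  set ρ := retraction r
  obtain ⟨Z, i, p, hip, hpi⟩ := IsIdempotentComplete.idempotents_split Y (𝟙 Y - ρ ≫ r)
    (Idempotents.idem_of_id_sub_idem _ (by simp [ρ]))
  have : IsSplitMono i := .mk' ⟨p, hip⟩
  have : IsSplitEpi p := .mk' ⟨i, hip⟩
  have hrp : r ≫ p = 0 := by
    rw [← cancel_mono i, Category.assoc, hpi]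
    simp [ρ]
  have hiρ : i ≫ ρ = 0 := by
    rw [← cancel_epi p, ← Category.assoc, hpi]
    simp [ρ]
  let c : BinaryBicone W Z :=
    { pt := Y, fst := ρ, snd := p, inl := r, inr := i
      inl_fst := IsSplitMono.id r, inl_snd := hrp, inr_fst := hiρ, inr_snd := hip }
  refine ⟨Z, biprod.uniqueUpToIso W Z (isBinaryBilimitOfTotal c (by simp [c, hpi])), ?_⟩
  ext <;> simp [c, ρ, hrp]

theorem CategoryTheory.Functor.map_biprod_inl_comp_mapBiprod_hom {C D : Type*} [Category C]
    [Category D] [HasZeroMorphisms C] [HasZeroMorphisms D] (F : C ⥤ D)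
    [F.PreservesZeroMorphisms] (X Y : C) [HasBinaryBiproduct X Y]
    [PreservesBinaryBiproduct X Y F] :
    F.map biprod.inl ≫ (F.mapBiprod X Y).hom = biprod.inl := by
  apply biprod.hom_ext <;>
    simp only [Functor.mapBiprod_hom, Category.assoc, biprod.lift_fst, biprod.lift_snd,
      ← F.map_comp, biprod.inl_fst, biprod.inl_snd, F.map_id, F.map_zero]

noncomputable def CategoryTheory.Limits.cokernelCompBiprodInlIso {A : Type*} [Category A]
    [HasZeroMorphisms A] [HasCokernels A] [HasBinaryBiproducts A] {P Q : A} (u : P ⟶ Q)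
    (R : A) : cokernel (u ≫ (biprod.inl : Q ⟶ Q ⊞ R)) ≅ cokernel u ⊞ R where
  hom := cokernel.desc _ (biprod.map (cokernel.π u) (𝟙 R)) (by simp)
  inv := biprod.desc
    (cokernel.desc u (biprod.inl ≫ cokernel.π _) (by rw [← Category.assoc, cokernel.condition]))
    (biprod.inr ≫ cokernel.π _)
  hom_inv_id := by
    apply coequalizer.hom_ext
    apply biprod.hom_ext' <;> simp
  inv_hom_id := by
    apply biprod.hom_ext'
    · apply coequalizer.hom_ext
      simp
    · simp

theorem stmt8 {C : Type u} [Category.{v} C] [Preadditive C] [HasFiniteBiproducts C]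
    (h0k : HasZeroKernels C) (h0c : HasZeroCokernels C) {X Y : C} (f : X ⟶ Y) :
    ∃ (X' Y' : C) (g : X' ⟶ Y') (Z : C), Mono g ∧ Epi g ∧
      Nonempty (cokernel (preadditiveYoneda.map f) ≅
        cokernel (preadditiveYoneda.map g) ⊞ preadditiveYoneda.obj Z) := by
  obtain ⟨W, s, hs, r, hr, rfl⟩ := h0c f
  obtain ⟨X', g, hg, h, hh, rfl⟩ := h0k s
  have := isIdempotentComplete_of_hasZeroKernels h0k
  have := hasBinaryBiproducts_of_finite_biproducts C
  obtain ⟨Z, e, he⟩ := IsSplitMono.exists_comp_iso_eq_biprod_inl r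
  refine ⟨X', W, g, Z, hg, epi_of_epi h g, ⟨?_⟩⟩
  let y : C ⥤ Cᵒᵖ ⥤ AddCommGrpCat.{v} := preadditiveYoneda
  have := preservesBinaryBiproducts_of_preservesBiproducts y
  calc cokernel (y.map ((h ≫ g) ≫ r))
      ≅ cokernel (y.map h ≫ y.map g ≫ y.map r) := cokernelIsoOfEq (by simp)
    _ ≅ cokernel (y.map g ≫ y.map r) := cokernelEpiComp _ _
    _ ≅ cokernel ((y.map g ≫ y.map r) ≫ y.map e.hom ≫ (y.mapBiprod W Z).hom) :=
        (cokernelCompIsIso _ _).symm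
    _ ≅ cokernel (y.map g ≫ biprod.inl) := cokernelIsoOfEq (by
        rw [Category.assoc, ← y.map_comp_assoc r, he, y.map_biprod_inl_comp_mapBiprod_hom])
    _ ≅ cokernel (y.map g) ⊞ y.obj Z := cokernelCompBiprodInlIso _ _
end

section
/- Let B be a category with enough injectives that has 0-cokernels. Then every object X of B admits a bimorphism X ⟶ I with I an injective object of B. -/
open CategoryTheory Limits

universe v u

/-!
A `0`-cokernel `s` of a monomorphism `f : X ⟶ J` into an injective object is the required
bimorphism: it is epi by definition, mono because `s ≫ r = f` is mono, and its target is
injective because it is a retract of `J` via the split monomorphism `r`.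
-/

theorem CategoryTheory.Injective.of_isSplitMono {B : Type u} [Category.{v} B] {W J : B}
    (r : W ⟶ J) [IsSplitMono r] [Injective J] : Injective W :=
  (Retract.mk r (retraction r) (IsSplitMono.id r)).injective

section

variable {B : Type u} [Category.{v} B] {X Y W : B} {f : X ⟶ Y} {s : X ⟶ W}

theorem IsZeroCokernel.mono [Mono f] (hs : IsZeroCokernel f s) : Mono s := by
  obtain ⟨-, r, -, hfr⟩ := hs
  exact mono_of_mono_fac hfr.symm

theorem IsZeroCokernel.injective [Injective Y] (hs : IsZeroCokernel f s) : Injective W := by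
  obtain ⟨-, r, hr, -⟩ := hs
  exact Injective.of_isSplitMono r

end

theorem stmt9 {B : Type u} [Category.{v} B] [EnoughInjectives B]
    (h : HasZeroCokernels B) (X : B) :
    ∃ (I : B) (i : X ⟶ I), Injective I ∧ Mono i ∧ Epi i := by
  obtain ⟨W, s, hs⟩ := h (Injective.ι X)
  exact ⟨W, s, hs.injective, hs.mono, hs.1⟩
end

section
/- Let B be an arbitrary category. The following are equivalent: (i) every object of B admits a bimorphism into an injective object; (ii) B has enough injectives, and every object X of B admits a morphism η : X ⟶ I with I injective such that for every morphism f : X ⟶ J with J injective there exists a unique morphism g : I ⟶ J with f = g ∘ η (i.e. the full subcategory of injective objects is reflective with pointwise reflections η). -/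
/-! A bimorphism `i : X ⟶ I` into an injective is a reflection: maps to injectives extend along
the mono `i`, uniquely because `i` is epi. Conversely, a reflection `η` is mono because a
monomorphism of `X` into an injective factors through it, and epi because maps `u v : I ⟶ Z`
with `η ≫ u = η ≫ v` stay equal after composing with a mono `Z ⟶ J` into an injective, by
uniqueness of factorizations through `η`. -/

open CategoryTheory Limits

universe v u

namespace CategoryTheory

variable {C : Type u} [Category.{v} C]

theorem Injective.existsUnique_comp_eq_of_mono_of_epi {X I J : C} (i : X ⟶ I) [Mono i] [Epi i]
    [Injective J] (f : X ⟶ J) : ∃! g : I ⟶ J, f = i ≫ g :=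
  ⟨Injective.factorThru f i, (Injective.comp_factorThru f i).symm, fun g hg => by
    rw [← cancel_epi i, ← hg, Injective.comp_factorThru]⟩

variable [EnoughInjectives C]

theorem mono_of_forall_injective_factorization {X I : C} (η : X ⟶ I)
    (h : ∀ (J : C) (f : X ⟶ J), Injective J → ∃ g : I ⟶ J, f = η ≫ g) : Mono η := by
  obtain ⟨g, hg⟩ := h _ (Injective.ι X) inferInstance
  have : Mono (η ≫ g) := hg ▸ inferInstance
  exact mono_of_mono η g

theorem epi_of_forall_injective_cancel {X I : C} (η : X ⟶ I)
    (h : ∀ (J : C) (u v : I ⟶ J), Injective J → η ≫ u = η ≫ v → u = v) : Epi η :=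
  ⟨fun u v huv => (cancel_mono (Injective.ι _)).mp <|
    h _ _ _ inferInstance (by rw [reassoc_of% huv])⟩

end CategoryTheory

theorem stmt10 {B : Type u} [Category.{v} B] :
    (∀ X : B, ∃ (I : B) (i : X ⟶ I), Injective I ∧ Mono i ∧ Epi i) ↔
    (EnoughInjectives B ∧
      ∀ X : B, ∃ (I : B) (η : X ⟶ I), Injective I ∧
        ∀ (J : B) (f : X ⟶ J), Injective J → ∃! g : I ⟶ J, f = η ≫ g) := by
  constructor
  · intro h
    refine ⟨⟨fun X => ?_⟩, fun X => ?_⟩ <;> obtain ⟨I, i, hI, hi, hi'⟩ := h X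
    · exact ⟨⟨I, hI, i, hi⟩⟩
    · exact ⟨I, i, hI, fun J f hJ => Injective.existsUnique_comp_eq_of_mono_of_epi i f⟩
  · rintro ⟨hB, h⟩ X
    obtain ⟨I, η, hI, hη⟩ := h X
    refine ⟨I, η, hI, mono_of_forall_injective_factorization η fun J f hJ => (hη J f hJ).exists,
      epi_of_forall_injective_cancel η fun J u v hJ huv => ?_⟩
    exact (hη J (η ≫ u) hJ).unique rfl huv
end

section
/- Let B be a category, let ε : P ⟶ X be a bimorphism with P a projective object of B, and let η : Y ⟶ I be a bimorphism with I an injective object of B. Then for every morphism g : P ⟶ Y there exists a unique morphism h : X ⟶ I such that h ∘ ε = η ∘ g. (Consequently the assignment g ↦ h is a bijection between Hom(P, Y) and Hom(X, I), which is the pointwise form of the adjunction between the injective-reflection and projective-coreflection functors.) -/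
open CategoryTheory Limits

universe v u

theorem CategoryTheory.Injective.existsUnique_comp_eq {C : Type u} [Category.{v} C] {X Y J : C}
    [Injective J] (f : X ⟶ Y) [Mono f] [Epi f] (k : X ⟶ J) : ∃! h : Y ⟶ J, f ≫ h = k :=
  ⟨Injective.factorThru k f, Injective.comp_factorThru k f,
    fun h hh => by rw [← cancel_epi f, hh, Injective.comp_factorThru]⟩

theorem stmt11_general {B : Type u} [Category.{v} B] {P X Y I : B}
    (ε : P ⟶ X) (η : Y ⟶ I) (hI : Injective I)
    (hεm : Mono ε) (hεe : Epi ε) (g : P ⟶ Y) :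
    ∃! h : X ⟶ I, ε ≫ h = g ≫ η :=
  Injective.existsUnique_comp_eq ε (g ≫ η)

theorem stmt11 {B : Type u} [Category.{v} B] {P X Y I : B}
    (ε : P ⟶ X) (η : Y ⟶ I) (hP : Projective P) (hI : Injective I)
    (hεm : Mono ε) (hεe : Epi ε) (hηm : Mono η) (hηe : Epi η) (g : P ⟶ Y) :
    ∃! h : X ⟶ I, ε ≫ h = g ≫ η :=
  stmt11_general ε η hI hεm hεe g
end

section
/- Let C be a preadditive category, let X and Y be objects of C, let ε : P ⟶ X be a bimorphism with P projective, and let η : Y ⟶ I be a bimorphism with I injective. Then the quotient abelian group Hom(X, I) / image( Hom(X, Y) → Hom(X, I), u ↦ η ∘ u ) is isomorphic to the quotient abelian group Hom(P, Y) / image( Hom(X, Y) → Hom(P, Y), u ↦ u ∘ ε ). (These quotients are the two constructions E_C(X,Y) of the extension group of the paper, computed via an injective coresolution of Y and via a projective resolution of X respectively.) -/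
/-!
Precomposition with the bimorphism `ε` identifies `Hom(X, I)` with `Hom(P, I)` (injective because
`ε` is epi, surjective because `I` is injective and `ε` is mono), and dually postcomposition with
`η` identifies `Hom(P, Y)` with `Hom(P, I)`. Both identifications carry the subgroup being divided
out onto the same subgroup `{ε ≫ u ≫ η}` of `Hom(P, I)`, so the two quotients agree.
-/

open CategoryTheory

universe v u

noncomputable def QuotientAddGroup.rangeCongrOfComm {G A B M : Type*} [AddGroup G]
    [AddCommGroup A] [AddCommGroup B] [AddCommGroup M] {f : G →+ A} {g : G →+ B}
    (e₁ : A ≃+ M) (e₂ : B ≃+ M)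
    (h : (e₁ : A →+ M).comp f = (e₂ : B →+ M).comp g) :
    (A ⧸ f.range) ≃+ (B ⧸ g.range) :=
  (QuotientAddGroup.congr _ _ e₁ (AddMonoidHom.map_range _ _)).trans
    (QuotientAddGroup.congr _ _ e₂ (by rw [AddMonoidHom.map_range, h])).symm

namespace CategoryTheory.Preadditive

variable {C : Type u} [Category.{v} C] [Preadditive C]

noncomputable def leftCompAddEquivOfInjective {P X : C} (ε : P ⟶ X) [Mono ε] [Epi ε]
    (I : C) [Injective I] : (X ⟶ I) ≃+ (P ⟶ I) :=
  AddEquiv.ofBijective (leftComp I ε)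
    ⟨fun _ _ h => (cancel_epi ε).1 h,
      fun g => ⟨Injective.factorThru g ε, Injective.comp_factorThru g ε⟩⟩

noncomputable def rightCompAddEquivOfProjective (P : C) [Projective P] {Y I : C} (η : Y ⟶ I)
    [Mono η] [Epi η] : (P ⟶ Y) ≃+ (P ⟶ I) :=
  AddEquiv.ofBijective (rightComp P η)
    ⟨fun _ _ h => (cancel_mono η).1 h,
      fun g => ⟨Projective.factorThru g η, Projective.factorThru_comp g η⟩⟩

end CategoryTheory.Preadditive

theorem stmt12 {C : Type u} [Category.{v} C] [Preadditive C] {P X Y I : C}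
    (ε : P ⟶ X) (η : Y ⟶ I) (hP : Projective P) (hI : Injective I)
    (hεm : Mono ε) (hεe : Epi ε) (hηm : Mono η) (hηe : Epi η) :
    Nonempty (
      ((X ⟶ I) ⧸ AddMonoidHom.range
        (AddMonoidHom.mk' (fun u : X ⟶ Y => u ≫ η)
          (fun a b => by simp [Preadditive.add_comp]))) ≃+
      ((P ⟶ Y) ⧸ AddMonoidHom.range
        (AddMonoidHom.mk' (fun u : X ⟶ Y => ε ≫ u)
          (fun a b => by simp [Preadditive.comp_add])))) :=
  ⟨QuotientAddGroup.rangeCongrOfComm (Preadditive.leftCompAddEquivOfInjective ε I)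
    (Preadditive.rightCompAddEquivOfProjective P η)
    (AddMonoidHom.ext fun _ => (Category.assoc _ _ _).symm)⟩
end

section
/- Let C be a 0-abelian category with enough injectives. For each object X of C choose a bimorphism η_X : X ⟶ I_X with I_X injective (such exist). For a morphism f : X ⟶ Y there is a unique morphism f_I : I_X ⟶ I_Y with f_I ∘ η_X = η_Y ∘ f, and: (a) if f is a monomorphism, then f_I is a split monomorphism; (b) if f is an epimorphism, then f_I is a split epimorphism. -/
open CategoryTheory Limits

universe v u

/-!
The bimorphism `η_X` is epi, so `f_I` is determined by `η_X ≫ f_I = f ≫ η_Y`.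
If `f` is mono, so is `η_X ≫ f_I = f ≫ η_Y`, and extending `η_X` along it splits `f_I`.
If `f` is epi, so is `f_I`; a `0`-kernel factorisation `f_I = h ≫ g` has `h` split epi and
`g` a monomorphism out of a retract of the injective `I_X`, hence split mono; being epi too,
`g` is an isomorphism.
-/

namespace CategoryTheory

variable {C : Type*} [Category C]

theorem Injective.existsUnique_comp_eq_s13 {X I J : C} (η : X ⟶ I) [Mono η] [Epi η] [Injective J]
    (g : X ⟶ J) : ∃! e : I ⟶ J, η ≫ e = g :=
  ⟨Injective.factorThru g η, Injective.comp_factorThru g η,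
    fun e he => by rw [← cancel_epi η, he, Injective.comp_factorThru]⟩

theorem Injective.isSplitMono_of_mono {I Y : C} (g : I ⟶ Y) [Injective I] [Mono g] :
    IsSplitMono g :=
  ⟨⟨⟨Injective.factorThru (𝟙 I) g, Injective.comp_factorThru (𝟙 I) g⟩⟩⟩

theorem Injective.isSplitMono_of_mono_comp {X I J : C} (a : X ⟶ I) (b : I ⟶ J) [Epi a]
    [Injective I] [Mono (a ≫ b)] : IsSplitMono b :=
  ⟨⟨⟨Injective.factorThru a (a ≫ b), by
    rw [← cancel_epi a, ← Category.assoc, Injective.comp_factorThru, Category.comp_id]⟩⟩⟩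

theorem Injective.isSplitEpi_of_epi (hk : HasZeroKernels C) {I J : C} (p : I ⟶ J)
    [Injective I] [Epi p] : IsSplitEpi p := by
  obtain ⟨Z, g, hg, h, hh, rfl⟩ := hk p
  have : Injective Z := (Retract.mk (section_ h) h (IsSplitEpi.id h)).injective
  have : Epi g := epi_of_epi h g
  have := Injective.isSplitMono_of_mono g
  have := isIso_of_epi_of_isSplitMono g
  infer_instance

end CategoryTheory

theorem stmt13_general {C : Type u} [Category.{v} C]
    (h0k : HasZeroKernels C)
    {X Y IX IY : C} (ηX : X ⟶ IX) (ηY : Y ⟶ IY)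
    (hIX : Injective IX) (hIY : Injective IY)
    (hXm : Mono ηX) (hXe : Epi ηX) (hYm : Mono ηY) (hYe : Epi ηY)
    (f : X ⟶ Y) :
    (∃! fI : IX ⟶ IY, ηX ≫ fI = f ≫ ηY) ∧
    ∀ fI : IX ⟶ IY, ηX ≫ fI = f ≫ ηY →
      (Mono f → IsSplitMono fI) ∧ (Epi f → IsSplitEpi fI) := by
  refine ⟨Injective.existsUnique_comp_eq_s13 ηX (f ≫ ηY), fun fI hfI => ⟨fun hf => ?_, fun hf => ?_⟩⟩
  · have : Mono (ηX ≫ fI) := hfI ▸ mono_comp f ηY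
    exact Injective.isSplitMono_of_mono_comp ηX fI
  · have : Epi (ηX ≫ fI) := hfI ▸ epi_comp f ηY
    have : Epi fI := epi_of_epi ηX fI
    exact Injective.isSplitEpi_of_epi h0k fI

theorem stmt13 {C : Type u} [Category.{v} C] [Preadditive C] [HasFiniteBiproducts C]
    (h0k : HasZeroKernels C) (h0c : HasZeroCokernels C) [EnoughInjectives C]
    {X Y IX IY : C} (ηX : X ⟶ IX) (ηY : Y ⟶ IY)
    (hIX : Injective IX) (hIY : Injective IY)
    (hXm : Mono ηX) (hXe : Epi ηX) (hYm : Mono ηY) (hYe : Epi ηY)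
    (f : X ⟶ Y) :
    (∃! fI : IX ⟶ IY, ηX ≫ fI = f ≫ ηY) ∧
    ∀ fI : IX ⟶ IY, ηX ≫ fI = f ≫ ηY →
      (Mono f → IsSplitMono fI) ∧ (Epi f → IsSplitEpi fI) :=
  stmt13_general h0k ηX ηY hIX hIY hXm hXe hYm hYe f
end

section
/- (Not so long exact sequence.) Let C be a 0-abelian category with enough injectives. For each object X choose a bimorphism η_X : X ⟶ I_X with I_X injective, set E(-,X) := mr(η_X) in Cᵒᵖ ⥤ AddCommGrp, and let ψ_X : y(I_X) ⟶ E(-,X) be the canonical cokernel projection. Let f : X ⟶ Y be a bimorphism in C, let f_I : I_X ⟶ I_Y be the unique morphism with f_I ∘ η_X = η_Y ∘ f, and let E(-,f) : E(-,X) ⟶ E(-,Y) be the morphism induced on cokernels. Then f_I is an isomorphism, and the sequence 0 → y(X) → y(Y) → E(-,X) → E(-,Y) → 0 is exact in Cᵒᵖ ⥤ AddCommGrp, where the first map is y(f), the connecting map is ψ_X ∘ y(f_I)⁻¹ ∘ y(η_Y), and the last map is E(-,f). -/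
/-!
The inverse of `fI` is the extension of `ηX` along the bimorphism `f ≫ ηY` into the injective
object `IX`; both composites are identities because `ηX` and `f ≫ ηY` are epimorphisms.
After applying the Yoneda embedding, which preserves monomorphisms, the sequence is the cokernel
sequence of the commutative square `y ηX ≫ y fI = y f ≫ y ηY` with `y fI` invertible and `y ηY`
mono, and its exactness is a diagram chase up to refinements.
-/

open CategoryTheory Limits

universe v u

instance preservesMonomorphisms_preadditiveYoneda {C : Type u} [Category.{v} C] [Preadditive C] :
    (preadditiveYoneda : C ⥤ Cᵒᵖ ⥤ AddCommGrpCat).PreservesMonomorphisms where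
  preserves h _ := by
    have (A : Cᵒᵖ) : Mono ((preadditiveYoneda.map h).app A) :=
      (AddCommGrpCat.mono_iff_injective _).2 fun _ _ hab => (cancel_mono h).1 hab
    exact NatTrans.mono_of_mono_app _

theorem isIso_of_comp_eq_bimorphism_of_injective {C : Type u} [Category.{v} C] {X I J : C}
    (η : X ⟶ I) [Epi η] [Injective I] (g : X ⟶ J) [Mono g] [Epi g] (φ : I ⟶ J)
    (h : η ≫ φ = g) : IsIso φ := by
  refine ⟨Injective.factorThru η g, ?_, ?_⟩
  · rw [← cancel_epi η, reassoc_of% h, Injective.comp_factorThru, Category.comp_id]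
  · rw [← cancel_epi g, reassoc_of% (Injective.comp_factorThru η g), h, Category.comp_id]

instance epi_cokernel_map_of_epi {C : Type u} [Category.{v} C] [HasZeroMorphisms C]
    {P Q I J : C} (n : P ⟶ I) [HasCokernel n] (m : Q ⟶ J) [HasCokernel m] (f : P ⟶ Q)
    (φ : I ⟶ J) [Epi φ] (h : n ≫ φ = f ≫ m) : Epi (cokernel.map n m f φ h) :=
  epi_of_epi_fac (cokernel.π_desc _ _ _)

section CokernelSequence

variable {D : Type*} [Category D] [Abelian D] {P Q I J : D} (f : P ⟶ Q) (m : Q ⟶ J)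
  (n : P ⟶ I) (φ : I ⟶ J) [IsIso φ] (h : n ≫ φ = f ≫ m)

include h in
theorem exact_comp_inv_comp_cokernel_π [Mono m] (w : f ≫ m ≫ inv φ ≫ cokernel.π n = 0) :
    (ShortComplex.mk f (m ≫ inv φ ≫ cokernel.π n) w).Exact := by
  rw [ShortComplex.exact_iff_exact_up_to_refinements]
  intro A x hx
  obtain ⟨A', π, _, y, hy⟩ :=
    (ShortComplex.exact_cokernel n).exact_up_to_refinements (x ≫ m ≫ inv φ) (by simpa using hx)
  refine ⟨A', π, inferInstance, y, ?_⟩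
  dsimp at hy ⊢
  rw [← cancel_mono m]
  simp only [Category.assoc, ← h, ← reassoc_of% hy, IsIso.inv_hom_id, Category.comp_id]

theorem exact_cokernel_map_of_isIso
    (w : (m ≫ inv φ ≫ cokernel.π n) ≫ cokernel.map n m f φ h = 0) :
    (ShortComplex.mk (m ≫ inv φ ≫ cokernel.π n) (cokernel.map n m f φ h) w).Exact := by
  rw [ShortComplex.exact_iff_exact_up_to_refinements]
  intro A x hx
  obtain ⟨A', π, _, y, hy⟩ := surjective_up_to_refinements_of_epi (cokernel.π n) x
  obtain ⟨A'', π', _, z, hz⟩ := (ShortComplex.exact_cokernel m).exact_up_to_refinements (y ≫ φ)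
    (by simpa [reassoc_of% hy] using π ≫= hx)
  refine ⟨A'', π' ≫ π, inferInstance, z, ?_⟩
  simp [hy, ← reassoc_of% hz]

end CokernelSequence

/-- The "not so long exact sequence" induced by a bimorphism in a `0`-abelian category
with enough injectives. -/
theorem stmt14 {C : Type u} [Category.{v} C] [Preadditive C]
    {X Y IX IY : C} (ηX : X ⟶ IX) (ηY : Y ⟶ IY)
    (hIX : Injective IX)
    (hXe : Epi ηX) (hYm : Mono ηY) (hYe : Epi ηY)
    (f : X ⟶ Y) (hfm : Mono f) (hfe : Epi f)
    (fI : IX ⟶ IY) (hfI : ηX ≫ fI = f ≫ ηY) :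
    ∃ _ : IsIso fI,
      Mono (preadditiveYoneda.map f) ∧
      (ShortComplex.mk (preadditiveYoneda.map f)
        (preadditiveYoneda.map ηY ≫ inv (preadditiveYoneda.map fI) ≫
          cokernel.π (preadditiveYoneda.map ηX))
        (by
          have h : preadditiveYoneda.map f ≫ preadditiveYoneda.map ηY =
              preadditiveYoneda.map ηX ≫ preadditiveYoneda.map fI := by
            rw [← Functor.map_comp, ← Functor.map_comp, hfI]
          rw [← Category.assoc, h, Category.assoc, IsIso.hom_inv_id_assoc,
            cokernel.condition])).Exact ∧
      (ShortComplex.mk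
        (preadditiveYoneda.map ηY ≫ inv (preadditiveYoneda.map fI) ≫
          cokernel.π (preadditiveYoneda.map ηX))
        (cokernel.map (preadditiveYoneda.map ηX) (preadditiveYoneda.map ηY)
          (preadditiveYoneda.map f) (preadditiveYoneda.map fI)
          (by rw [← Functor.map_comp, ← Functor.map_comp, hfI]))
        (by simp)).Exact ∧
      Epi (cokernel.map (preadditiveYoneda.map ηX) (preadditiveYoneda.map ηY)
        (preadditiveYoneda.map f) (preadditiveYoneda.map fI)
        (by rw [← Functor.map_comp, ← Functor.map_comp, hfI])) := by
  have := hIX; have := hXe; have := hYm; have := hYe; have := hfm; have := hfe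
  have := isIso_of_comp_eq_bimorphism_of_injective ηX (f ≫ ηY) fI hfI
  have hsq : preadditiveYoneda.map ηX ≫ preadditiveYoneda.map fI =
      preadditiveYoneda.map f ≫ preadditiveYoneda.map ηY := by
    rw [← Functor.map_comp, ← Functor.map_comp, hfI]
  exact ⟨inferInstance, inferInstance,
    exact_comp_inv_comp_cokernel_π _ _ _ _ hsq _, exact_cokernel_map_of_isIso _ _ _ _ hsq _,
    inferInstance⟩
end

section
/- (0-abelian version of Auslander's conjecture on direct summands of Ext.) Let C be a 0-abelian category with enough injectives. For each object X choose a bimorphism η_X : X ⟶ I_X with I_X injective and set E(-,X) := mr(η_X) in Cᵒᵖ ⥤ AddCommGrp. Then for every object X of C, every retract (direct summand) F of E(-,X) in Cᵒᵖ ⥤ AddCommGrp is isomorphic to E(-,V) for some object V of C. Moreover V can be chosen together with a bimorphism h : X ⟶ V in C such that the induced morphism E(-,h) : E(-,X) ⟶ E(-,V) on cokernels is a split epimorphism. -/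
/-
Write `e = r ≫ i` for the idempotent of `E(-,X) = coker y(η_X)` splitting off `F`. By Yoneda,
`π ≫ e` (with `π : y(I_X) ⟶ E(-,X)`) is `y(u) ≫ π` for an endomorphism `u` of `I_X`. A `0`-kernel
`g : V ⟶ I_X` of `[η_X, 1 - u] : X ⊞ I_X ⟶ I_X` is a mono through which `η_X` and `1 - u` factor,
and conversely `g` lies in the span of `η_X` and `1 - u`. So `g` is a bimorphism into an injective
object, hence `η_V` up to an isomorphism `I_X ≅ I_V`; the factorisation `h : X ⟶ V` of `η_X` through
`g` is again a bimorphism, and `coker y(g)` is `E(-,X)` divided by the image of `1 - e`, i.e. `F`.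
-/

open CategoryTheory Limits

universe v u

open Opposite Category

section Yoneda

variable {C : Type u} [Category.{v} C] [Preadditive C]

instance preadditiveYoneda_additive : (preadditiveYoneda (C := C)).Additive where
  map_add {_ _ _ _} := by
    ext A x
    exact Preadditive.comp_add _ _ _ _ _ _

lemma preadditiveYoneda_hom_ext {B : C} {G : Cᵒᵖ ⥤ AddCommGrpCat.{v}}
    {α β : preadditiveYoneda.obj B ⟶ G} (h : α.app (op B) (𝟙 B) = β.app (op B) (𝟙 B)) :
    α = β := by
  ext A f
  change A.unop ⟶ B at f
  have hα : α.app A (f ≫ 𝟙 B) = G.map f.op (α.app (op B) (𝟙 B)) :=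
    ConcreteCategory.congr_hom (α.naturality f.op) (𝟙 B)
  have hβ : β.app A (f ≫ 𝟙 B) = G.map f.op (β.app (op B) (𝟙 B)) :=
    ConcreteCategory.congr_hom (β.naturality f.op) (𝟙 B)
  rw [comp_id] at hα hβ
  rw [hα, hβ, h]

lemma exists_preadditiveYoneda_map_comp_eq_of_epi {A B : C} {G : Cᵒᵖ ⥤ AddCommGrpCat.{v}}
    (π : preadditiveYoneda.obj A ⟶ G) [Epi π] (φ : preadditiveYoneda.obj B ⟶ G) :
    ∃ u : B ⟶ A, preadditiveYoneda.map u ≫ π = φ := by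
  obtain ⟨u, hu⟩ := (AddCommGrpCat.epi_iff_surjective (π.app (op B))).mp inferInstance
    (φ.app (op B) (𝟙 B))
  change B ⟶ A at u
  refine ⟨u, preadditiveYoneda_hom_ext ?_⟩
  show π.app (op B) (𝟙 B ≫ u) = _
  rwa [id_comp]

end Yoneda

section ZeroKernels

variable {C : Type u} [Category.{v} C]

lemma HasZeroKernels.exists_mono_factoring_biprod_desc [Preadditive C] [HasBinaryBiproducts C]
    (h0k : HasZeroKernels C) {X Y J : C} (f₁ : X ⟶ J) (f₂ : Y ⟶ J) :
    ∃ (Z : C) (g : Z ⟶ J) (h : X ⟶ Z) (k : Y ⟶ Z) (a₁ : Z ⟶ X) (a₂ : Z ⟶ Y),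
      Mono g ∧ h ≫ g = f₁ ∧ k ≫ g = f₂ ∧ g = a₁ ≫ f₁ + a₂ ≫ f₂ := by
  obtain ⟨Z, g, hg, p, hp, hm⟩ := h0k (biprod.desc f₁ f₂)
  obtain ⟨s⟩ := hp.exists_splitEpi
  refine ⟨Z, g, biprod.inl ≫ p, biprod.inr ≫ p, s.section_ ≫ biprod.fst,
    s.section_ ≫ biprod.snd, hg, ?_, ?_, ?_⟩
  · rw [assoc, ← hm, biprod.inl_desc]
  · rw [assoc, ← hm, biprod.inr_desc]
  · rw [assoc, assoc, ← Preadditive.comp_add, ← biprod.desc_eq, hm, ← assoc, s.id, id_comp]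

lemma epi_of_epi_fac_of_mono [EnoughInjectives C] {X Y Z : C} {f : X ⟶ Y} {g : Y ⟶ Z}
    {h : X ⟶ Z} [Epi h] [Mono g] (w : f ≫ g = h) : Epi f := by
  refine ⟨fun {T} t₁ t₂ ht => ?_⟩
  let s₁ := Injective.factorThru (t₁ ≫ Injective.ι T) g
  let s₂ := Injective.factorThru (t₂ ≫ Injective.ι T) g
  have hs : s₁ = s₂ := by
    rw [← cancel_epi h, ← w, assoc, assoc, Injective.comp_factorThru, Injective.comp_factorThru,
      reassoc_of% ht]
  rw [← cancel_mono (Injective.ι T), ← Injective.comp_factorThru (t₁ ≫ Injective.ι T) g,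
    ← Injective.comp_factorThru (t₂ ≫ Injective.ι T) g]
  exact congrArg (g ≫ ·) hs

lemma exists_iso_comp_hom_eq_of_bimorphisms {Z J J' : C} [Injective J] [Injective J']
    (g : Z ⟶ J) (g' : Z ⟶ J') [Mono g] [Epi g] [Mono g'] [Epi g'] :
    ∃ e : J ≅ J', g ≫ e.hom = g' := by
  have ha := Injective.comp_factorThru g' g
  have hb := Injective.comp_factorThru g g'
  refine ⟨⟨Injective.factorThru g' g, Injective.factorThru g g', ?_, ?_⟩, ha⟩
  · rw [← cancel_epi g, reassoc_of% ha, hb, comp_id]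
  · rw [← cancel_epi g', reassoc_of% hb, ha, comp_id]

end ZeroKernels

section Retract

variable {𝒜 : Type*} [Category 𝒜] [Preadditive 𝒜] {A S P P' F : 𝒜}
  {f : A ⟶ P} {φ : S ⟶ P'} [HasCokernel f] [HasCokernel φ]

/- `v` lifts the idempotent `r ≫ i` and `φ` is `f` enlarged (through `w`) by `1 - v`, so `cokernel φ`
is `cokernel f` with the complement of `F` killed. -/
lemma nonempty_iso_cokernel_and_isSplitEpi_cokernel_map_of_retract {h : A ⟶ S} (w : P ≅ P')
    (hw : f ≫ w.hom = h ≫ φ) {i : F ⟶ cokernel f} {r : cokernel f ⟶ F} (hri : i ≫ r = 𝟙 F)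
    {v : P ⟶ P} (hv : v ≫ cokernel.π f = cokernel.π f ≫ r ≫ i)
    {k : P ⟶ S} (hk : (𝟙 P - v) ≫ w.hom = k ≫ φ) (hφ : φ ≫ w.inv ≫ cokernel.π f ≫ r = 0) :
    Nonempty (F ≅ cokernel φ) ∧ IsSplitEpi (cokernel.map f φ h w.hom hw) := by
  set τ := cokernel.map f φ h w.hom hw
  have hτ : cokernel.π f ≫ τ = w.hom ≫ cokernel.π φ := cokernel.π_desc _ _ _
  set ψ := cokernel.desc φ (w.inv ≫ cokernel.π f ≫ r) hφ
  have hψ : cokernel.π φ ≫ ψ = w.inv ≫ cokernel.π f ≫ r := cokernel.π_desc _ _ _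
  have hτψ : τ ≫ ψ = r := by
    rw [← cancel_epi (cokernel.π f), reassoc_of% hτ, hψ, w.hom_inv_id_assoc]
  have hv_fix : v ≫ w.hom ≫ cokernel.π φ = w.hom ≫ cokernel.π φ := by
    have := congrArg (· ≫ cokernel.π φ) hk
    simp only [Preadditive.sub_comp, id_comp, assoc, cokernel.condition, comp_zero,
      sub_eq_zero] at this
    exact this.symm
  have hψτ : ψ ≫ i ≫ τ = 𝟙 (cokernel φ) := by
    rw [← cancel_epi (cokernel.π φ), reassoc_of% hψ, comp_id, ← reassoc_of% hv, hτ, hv_fix,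
      w.inv_hom_id_assoc]
  exact ⟨⟨⟨i ≫ τ, ψ, by rw [assoc, hτψ, hri], hψτ⟩⟩, ⟨ψ ≫ i, by rw [assoc, hψτ]⟩⟩

end Retract

/-- The `0`-abelian version of Auslander's conjecture on direct summands of `Ext`:
every direct summand of `E(-,X) = cokernel (y(η_X))` is of the form `E(-,V)`,
and `V` can be chosen together with a bimorphism `h : X ⟶ V` such that the induced
morphism `E(-,h)` on cokernels is a split epimorphism. -/
theorem stmt15 {C : Type u} [Category.{v} C] [Preadditive C] [HasFiniteBiproducts C]
    (h0k : HasZeroKernels C) [EnoughInjectives C]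
    (I : C → C) (η : ∀ A : C, A ⟶ I A) (hinj : ∀ A, Injective (I A))
    (hmono : ∀ A, Mono (η A)) (hepi : ∀ A, Epi (η A))
    (X : C) (F : Cᵒᵖ ⥤ AddCommGrpCat.{v})
    (i : F ⟶ cokernel (preadditiveYoneda.map (η X)))
    (r : cokernel (preadditiveYoneda.map (η X)) ⟶ F)
    (hri : i ≫ r = 𝟙 F) :
    ∃ (V : C) (h : X ⟶ V) (hI : I X ⟶ I V) (comm : η X ≫ hI = h ≫ η V),
      Mono h ∧ Epi h ∧
      Nonempty (F ≅ cokernel (preadditiveYoneda.map (η V))) ∧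
      IsSplitEpi (cokernel.map (preadditiveYoneda.map (η X)) (preadditiveYoneda.map (η V))
        (preadditiveYoneda.map h) (preadditiveYoneda.map hI)
        (by rw [← Functor.map_comp, ← Functor.map_comp, comm])) := by
  have := hasBinaryBiproducts_of_finite_biproducts C
  let π := cokernel.π (preadditiveYoneda.map (η X))
  obtain ⟨u, hu⟩ := exists_preadditiveYoneda_map_comp_eq_of_epi π (π ≫ r ≫ i)
  obtain ⟨V, g, h, k, a₁, a₂, hg, hhg, hkg, hg_eq⟩ :=
    h0k.exists_mono_factoring_biprod_desc (η X) (𝟙 (I X) - u)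
  have := epi_of_epi_fac hhg
  obtain ⟨a, ha⟩ := exists_iso_comp_hom_eq_of_bimorphisms g (η V)
  have comm : η X ≫ a.hom = h ≫ η V := by rw [← hhg, assoc, ha]
  have hu_sub : preadditiveYoneda.map (𝟙 (I X) - u) ≫ π ≫ r = 0 := by
    rw [Functor.map_sub, CategoryTheory.Functor.map_id, Preadditive.sub_comp, id_comp,
      reassoc_of% hu, hri, comp_id, sub_self]
  refine ⟨V, h, a.hom, comm, mono_of_mono_fac hhg, epi_of_epi_fac_of_mono hhg,
    nonempty_iso_cokernel_and_isSplitEpi_cokernel_map_of_retract (preadditiveYoneda.mapIso a) _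
      hri hu (k := preadditiveYoneda.map k) ?_ ?_⟩
  · rw [← CategoryTheory.Functor.map_id, ← Functor.map_sub, Functor.mapIso_hom,
      ← Functor.map_comp, ← Functor.map_comp, ← hkg, assoc, ha]
  · rw [Functor.mapIso_inv, ← Functor.map_comp_assoc, ← ha, assoc, a.hom_inv_id, comp_id, hg_eq,
      Functor.map_add, Preadditive.add_comp, Functor.map_comp_assoc, Functor.map_comp_assoc,
      cokernel.condition_assoc, hu_sub, zero_comp, comp_zero, comp_zero, add_zero]
end

section
/- (0-abelian Hilton–Rees theorem.) Let C be a 0-abelian category with enough injectives. For each object X choose a bimorphism η_X : X ⟶ I_X with I_X injective and set E(-,X) := mr(η_X) in Cᵒᵖ ⥤ AddCommGrp; for f : X ⟶ Y let E(-,f) : E(-,X) ⟶ E(-,Y) be the morphism induced on cokernels by the unique f_I : I_X ⟶ I_Y with f_I ∘ η_X = η_Y ∘ f. Then for all objects X, Y of C: (1) the map Hom_C(X,Y) → Hom(E(-,X), E(-,Y)), f ↦ E(-,f), is an additive group homomorphism; (2) it is surjective, i.e. every morphism α : E(-,X) ⟶ E(-,Y) equals E(-,f) for some f : X ⟶ Y;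 (3) its kernel consists exactly of the morphisms that factor through an injective object of C, i.e. E(-,f) = 0 if and only if f factors through an injective object. (Hence the injectively stable Hom-group of C is isomorphic to Hom(E(-,X), E(-,Y)).) -/
open CategoryTheory Limits

universe v u

/-- Given `η_X : X ⟶ I_X`, `η_Y : Y ⟶ I_Y`, a morphism `f : X ⟶ Y` and a compatible
`f_I : I_X ⟶ I_Y`, this is the induced morphism
`E(-,f) : E(-,X) = cokernel (y(η_X)) ⟶ E(-,Y) = cokernel (y(η_Y))` on cokernels, where `y`
is the additive Yoneda embedding. -/
noncomputable def Emap {C : Type u} [Category.{v} C] [Preadditive C]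
    {X Y IX IY : C} (ηX : X ⟶ IX) (ηY : Y ⟶ IY)
    (f : X ⟶ Y) (fI : IX ⟶ IY) (comm : ηX ≫ fI = f ≫ ηY) :
    cokernel (preadditiveYoneda.map ηX) ⟶ cokernel (preadditiveYoneda.map ηY) :=
  cokernel.map _ _ (preadditiveYoneda.map f) (preadditiveYoneda.map fI)
    (by rw [← Functor.map_comp, ← Functor.map_comp, comm])

/-!
Write `y` for the preadditive Yoneda embedding and `π_X` for `cokernel.π (y η_X)`. Because `η_X`
is epi, `f` determines `f_I`, and because `π_X` is epi, `E(-,f)` is determined by `y f_I ≫ π_Y`;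
additivity follows. Representable presheaves are projective, so for any `α` the map `π_X ≫ α`
lifts along the epi `π_Y` to some `y f_I`. Then `y (η_X ≫ f_I)` is killed by `π_Y`, so
`η_X ≫ f_I` factors through the mono `η_Y` as `f ≫ η_Y`. The same factorization shows that
`E(-,f) = 0` exactly when `f` factors through `η_X`, hence through an injective; conversely a
factorization through an injective `J` extends along `η_X`.
-/

open Opposite

namespace CategoryTheory

variable {C : Type u} [Category.{v} C] [Preadditive C]

lemma preadditiveYoneda_map_add {A B : C} (f g : A ⟶ B) :
    preadditiveYoneda.map (f + g) = preadditiveYoneda.map f + preadditiveYoneda.map g := by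
  ext Z (h : Z.unop ⟶ A)
  exact Preadditive.comp_add _ _ _ _ _ _

instance mono_preadditiveYoneda_map {A B : C} (f : A ⟶ B) [Mono f] :
    Mono (preadditiveYoneda.map f) := by
  have (Z : Cᵒᵖ) : Mono ((preadditiveYoneda.map f).app Z) :=
    (AddCommGrpCat.mono_iff_injective _).2 fun g h (e : g ≫ f = h ≫ f) => (cancel_mono f).1 e
  exact NatTrans.mono_of_mono_app _

lemma preadditiveYoneda_hom_ext {A : C} {F : Cᵒᵖ ⥤ AddCommGrpCat.{v}}
    {τ σ : preadditiveYoneda.obj A ⟶ F} (h : τ.app (op A) (𝟙 A) = σ.app (op A) (𝟙 A)) :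
    τ = σ := by
  ext Z (g : Z.unop ⟶ A)
  have hτ : τ.app Z (g ≫ 𝟙 A) = F.map g.op (τ.app (op A) (𝟙 A)) :=
    NatTrans.naturality_apply τ g.op (𝟙 A)
  have hσ : σ.app Z (g ≫ 𝟙 A) = F.map g.op (σ.app (op A) (𝟙 A)) :=
    NatTrans.naturality_apply σ g.op (𝟙 A)
  rw [Category.comp_id] at hτ hσ
  rw [hτ, hσ, h]

lemma exists_preadditiveYoneda_map_comp_eq {A B : C} {F : Cᵒᵖ ⥤ AddCommGrpCat.{v}}
    (p : preadditiveYoneda.obj B ⟶ F) [Epi p] (β : preadditiveYoneda.obj A ⟶ F) :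
    ∃ u : A ⟶ B, preadditiveYoneda.map u ≫ p = β := by
  obtain ⟨u, hu⟩ := (AddCommGrpCat.epi_iff_surjective (p.app (op A))).1 inferInstance
    (β.app (op A) (𝟙 A))
  exact ⟨u, preadditiveYoneda_hom_ext ((congrArg (p.app (op A)) (Category.id_comp u)).trans hu)⟩

lemma exists_comp_eq_of_preadditiveYoneda_map_comp_cokernel_π_eq_zero_s16 {A B I : C}
    (η : B ⟶ I) [Mono η] (u : A ⟶ I)
    (hu : preadditiveYoneda.map u ≫ cokernel.π (preadditiveYoneda.map η) = 0) :
    ∃ g : A ⟶ B, g ≫ η = u := by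
  obtain ⟨g, hg⟩ := preadditiveYoneda.map_surjective (Abelian.monoLift _ _ hu)
  refine ⟨g, preadditiveYoneda.map_injective ?_⟩
  rw [Functor.map_comp, hg, Abelian.monoLift_comp]

end CategoryTheory

section Emap

variable {C : Type u} [Category.{v} C] [Preadditive C] {X Y IX IY : C} (ηX : X ⟶ IX) (ηY : Y ⟶ IY)

lemma cokernel_π_comp_Emap (f : X ⟶ Y) (fI : IX ⟶ IY) (comm : ηX ≫ fI = f ≫ ηY) :
    cokernel.π (preadditiveYoneda.map ηX) ≫ Emap ηX ηY f fI comm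
      = preadditiveYoneda.map fI ≫ cokernel.π (preadditiveYoneda.map ηY) :=
  cokernel.π_desc _ _ _

lemma Emap_add [Epi ηX] {f g : X ⟶ Y} {fI gI sI : IX ⟶ IY}
    (commf : ηX ≫ fI = f ≫ ηY) (commg : ηX ≫ gI = g ≫ ηY) (comms : ηX ≫ sI = (f + g) ≫ ηY) :
    Emap ηX ηY (f + g) sI comms = Emap ηX ηY f fI commf + Emap ηX ηY g gI commg := by
  have hsI : sI = fI + gI := by
    rw [← cancel_epi ηX, comms, Preadditive.add_comp, Preadditive.comp_add, commf, commg]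
  rw [← cancel_epi (cokernel.π _), Preadditive.comp_add, cokernel_π_comp_Emap,
    cokernel_π_comp_Emap, cokernel_π_comp_Emap, hsI, preadditiveYoneda_map_add,
    Preadditive.add_comp]

lemma exists_Emap_eq [Mono ηY]
    (α : cokernel (preadditiveYoneda.map ηX) ⟶ cokernel (preadditiveYoneda.map ηY)) :
    ∃ (f : X ⟶ Y) (fI : IX ⟶ IY) (comm : ηX ≫ fI = f ≫ ηY), α = Emap ηX ηY f fI comm := by
  obtain ⟨fI, hfI⟩ := exists_preadditiveYoneda_map_comp_eq
    (cokernel.π (preadditiveYoneda.map ηY)) (cokernel.π (preadditiveYoneda.map ηX) ≫ α)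
  obtain ⟨f, hf⟩ := exists_comp_eq_of_preadditiveYoneda_map_comp_cokernel_π_eq_zero_s16 ηY (ηX ≫ fI)
    (by rw [Functor.map_comp, Category.assoc, hfI, cokernel.condition_assoc, zero_comp])
  refine ⟨f, fI, hf.symm, ?_⟩
  rw [← cancel_epi (cokernel.π _), cokernel_π_comp_Emap, hfI]

lemma Emap_eq_zero_iff [Injective IX] [Mono ηX] [Epi ηX] [Mono ηY] (f : X ⟶ Y) (fI : IX ⟶ IY)
    (comm : ηX ≫ fI = f ≫ ηY) :
    Emap ηX ηY f fI comm = 0 ↔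
      ∃ (J : C) (_ : Injective J) (a : X ⟶ J) (b : J ⟶ Y), f = a ≫ b := by
  rw [← cancel_epi (cokernel.π _), cokernel_π_comp_Emap, comp_zero]
  constructor
  · intro h
    obtain ⟨g, hg⟩ := exists_comp_eq_of_preadditiveYoneda_map_comp_cokernel_π_eq_zero_s16 ηY fI h
    refine ⟨IX, inferInstance, ηX, g, ?_⟩
    rw [← cancel_mono ηY, Category.assoc, hg, comm]
  · rintro ⟨J, _, a, b, rfl⟩
    have hfI : fI = (Injective.factorThru a ηX ≫ b) ≫ ηY := by
      simp only [← cancel_epi ηX, comm, Category.assoc, Injective.comp_factorThru_assoc]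
    rw [hfI, Functor.map_comp, Category.assoc, cokernel.condition, comp_zero]

end Emap

theorem stmt16_general {C : Type u} [Category.{v} C] [Preadditive C]
    {X Y IX IY : C} (ηX : X ⟶ IX) (ηY : Y ⟶ IY)
    (hIX : Injective IX)
    (hXm : Mono ηX) (hXe : Epi ηX) (hYm : Mono ηY) :
    (∀ (f g : X ⟶ Y) (fI gI sI : IX ⟶ IY)
        (commf : ηX ≫ fI = f ≫ ηY) (commg : ηX ≫ gI = g ≫ ηY)
        (comms : ηX ≫ sI = (f + g) ≫ ηY),
      Emap ηX ηY (f + g) sI comms = Emap ηX ηY f fI commf + Emap ηX ηY g gI commg) ∧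
    (∀ α : cokernel (preadditiveYoneda.map ηX) ⟶ cokernel (preadditiveYoneda.map ηY),
      ∃ (f : X ⟶ Y) (fI : IX ⟶ IY) (comm : ηX ≫ fI = f ≫ ηY),
        α = Emap ηX ηY f fI comm) ∧
    (∀ (f : X ⟶ Y) (fI : IX ⟶ IY) (comm : ηX ≫ fI = f ≫ ηY),
      Emap ηX ηY f fI comm = 0 ↔
        ∃ (J : C) (_ : Injective J) (a : X ⟶ J) (b : J ⟶ Y), f = a ≫ b) :=
  ⟨fun _ _ _ _ _ => Emap_add ηX ηY, exists_Emap_eq ηX ηY, Emap_eq_zero_iff ηX ηY⟩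

/-- The `0`-abelian Hilton–Rees theorem: `f ↦ E(-,f)` is additive, surjective onto
`Hom(E(-,X), E(-,Y))`, and its kernel consists exactly of the morphisms factoring
through an injective object. -/
theorem stmt16 {C : Type u} [Category.{v} C] [Preadditive C] [HasFiniteBiproducts C]
    (h0k : HasZeroKernels C) (h0c : HasZeroCokernels C) [EnoughInjectives C]
    {X Y IX IY : C} (ηX : X ⟶ IX) (ηY : Y ⟶ IY)
    (hIX : Injective IX) (hIY : Injective IY)
    (hXm : Mono ηX) (hXe : Epi ηX) (hYm : Mono ηY) (hYe : Epi ηY) :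
    (∀ (f g : X ⟶ Y) (fI gI sI : IX ⟶ IY)
        (commf : ηX ≫ fI = f ≫ ηY) (commg : ηX ≫ gI = g ≫ ηY)
        (comms : ηX ≫ sI = (f + g) ≫ ηY),
      Emap ηX ηY (f + g) sI comms = Emap ηX ηY f fI commf + Emap ηX ηY g gI commg) ∧
    (∀ α : cokernel (preadditiveYoneda.map ηX) ⟶ cokernel (preadditiveYoneda.map ηY),
      ∃ (f : X ⟶ Y) (fI : IX ⟶ IY) (comm : ηX ≫ fI = f ≫ ηY),
        α = Emap ηX ηY f fI comm) ∧
    (∀ (f : X ⟶ Y) (fI : IX ⟶ IY) (comm : ηX ≫ fI = f ≫ ηY),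
      Emap ηX ηY f fI comm = 0 ↔
        ∃ (J : C) (_ : Injective J) (a : X ⟶ J) (b : J ⟶ Y), f = a ≫ b) :=
  stmt16_general ηX ηY hIX hXm hXe hYm
end

section
/- Let R be a ring. The following are equivalent: (a) every R-linear map f : P → Q between finitely generated projective left R-modules factors as f = g ∘ h, where h : P → Z is a surjective R-linear map onto a finitely generated projective left R-module Z admitting an R-linear section (i.e. h is a split epimorphism of modules) and g : Z → Q is an injective R-linear map; (b) R is left semi-hereditary, i.e. every finitely generated submodule of a projective left R-module is projective. (Condition (a) says exactly that the category of finitely generated projective left R-modules has 0-kernels.) -/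
/-!
For a finitely generated projective `Q`, the image of `f : P → Q` is a finitely generated
submodule of `Q`, and a surjection onto a projective module splits; so if `R` is left
semi-hereditary, `P ↠ f(P) ↪ Q` is the required factorization. Conversely, a factorization
`f = g ∘ h` with `h` surjective and `g` injective identifies `f(P)` with the projective
module `Z`. A finitely generated submodule `N` of a projective module `M` is such an image:
`M` is a retract of a free module, in which `N` only involves finitely many coordinates,
so `N` embeds into a finitely generated free module and is the image of a map `R^n → R^S`.
-/

universe u v w

open Function LinearMap

theorem Finsupp.exists_finite_le_supported_of_fg {R ι : Type*} [Semiring R]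
    {N : Submodule R (ι →₀ R)} (hN : N.FG) :
    ∃ S : Set ι, S.Finite ∧ N ≤ Finsupp.supported R R S := by
  obtain ⟨T, rfl⟩ := hN
  exact ⟨_, T.finite_toSet.biUnion fun x _ => x.support.finite_toSet,
    Finsupp.span_le_supported_biUnion_support R _⟩

theorem Module.Projective.exists_injective_finsupp_of_finite {R : Type*} [Semiring R]
    {M : Type v} {N : Type w} [AddCommMonoid M] [Module R M] [AddCommMonoid N] [Module R N]
    [Module.Projective R M] [Module.Finite R N] (i : N →ₗ[R] M) (hi : Function.Injective i) :
    ∃ (ι : Type v) (_ : Finite ι) (ψ : N →ₗ[R] ι →₀ R), Function.Injective ψ := by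
  obtain ⟨s, hs⟩ := Module.projective_def.mp ‹Module.Projective R M›
  have hfg : (range (s ∘ₗ i)).FG := Module.Finite.iff_fg.mp (Module.Finite.range _)
  obtain ⟨S, hS, hle⟩ := Finsupp.exists_finite_le_supported_of_fg hfg
  let e := Finsupp.supportedEquivFinsupp (M := R) (R := R) S
  refine ⟨S, hS.to_subtype, e.toLinearMap ∘ₗ (s ∘ₗ i).codRestrict _ fun x => hle ⟨x, rfl⟩, ?_⟩
  intro x y hxy
  exact hi (hs.injective (congrArg Subtype.val (e.injective hxy)))

theorem LinearMap.projective_range_comp {R : Type*} [Semiring R] {P Q Z : Type*}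
    [AddCommMonoid P] [Module R P] [AddCommMonoid Q] [Module R Q] [AddCommMonoid Z] [Module R Z]
    [Module.Projective R Z] {h : P →ₗ[R] Z} {g : Z →ₗ[R] Q} (hh : Surjective h)
    (hg : Injective g) : Module.Projective R (range (g ∘ₗ h)) := by
  rw [range_comp, range_eq_top.mpr hh, Submodule.map_top]
  exact .of_equiv (LinearEquiv.ofInjective g hg)

/-- A ring `R` is left semi-hereditary iff the category of finitely generated projective
left `R`-modules has `0`-kernels, i.e. every linear map between finitely generated
projective modules factors as a split epimorphism (a surjection with a linear section)
followed by a monomorphism (an injection). -/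
theorem stmt18 (R : Type u) [Ring R] :
    (∀ (P Q : Type u) [AddCommGroup P] [Module R P] [AddCommGroup Q] [Module R Q],
      Module.Finite R P → Module.Projective R P →
      Module.Finite R Q → Module.Projective R Q →
      ∀ f : P →ₗ[R] Q,
        ∃ (Z : Type u) (_ : AddCommGroup Z) (_ : Module R Z),
          Module.Finite R Z ∧ Module.Projective R Z ∧
          ∃ (h : P →ₗ[R] Z) (g : Z →ₗ[R] Q),
            Function.Surjective h ∧ (∃ s : Z →ₗ[R] P, h ∘ₗ s = LinearMap.id) ∧
            Function.Injective g ∧ f = g ∘ₗ h) ↔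
    (∀ (M : Type u) [AddCommGroup M] [Module R M],
      Module.Projective R M → ∀ N : Submodule R M, N.FG → Module.Projective R N) := by
  constructor
  · intro hyp M _ _ _ N hN
    have := Module.Finite.iff_fg.mpr hN
    obtain ⟨ι, _, ψ, hψ⟩ :=
      Module.Projective.exists_injective_finsupp_of_finite N.subtype Subtype.val_injective
    obtain ⟨n, φ, hφ⟩ := Module.Finite.exists_fin' R N
    obtain ⟨Z, _, _, -, _, h, g, hh, -, hg, hfac⟩ :=
      hyp _ _ inferInstance inferInstance inferInstance inferInstance (ψ ∘ₗ φ)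
    have hrange : Module.Projective R (range (ψ ∘ₗ φ)) := hfac ▸ projective_range_comp hh hg
    rw [range_comp, range_eq_top.mpr hφ, Submodule.map_top] at hrange
    exact .of_equiv (LinearEquiv.ofInjective ψ hψ).symm
  · intro hyp P Q _ _ _ _ _ _ _ hQ f
    have hfg : (range f).FG := Module.Finite.iff_fg.mp (Module.Finite.range f)
    have := hyp Q hQ _ hfg
    exact ⟨range f, _, _, Module.Finite.range f, this, f.rangeRestrict, (range f).subtype,
      f.surjective_rangeRestrict, f.rangeRestrict.exists_rightInverse_of_surjective
        f.range_rangeRestrict, Subtype.val_injective, rfl⟩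
end

section
/- Let Λ be a right semi-hereditary ring, i.e. every finitely generated submodule of a projective right Λ-module is projective. Then for every finitely generated projective right Λ-module P, the endomorphism ring End_Λ(P) of P is right semi-hereditary: every finitely generated submodule of a projective right End_Λ(P)-module is projective. -/
/-!
Write `E = End_Λ(P)`. A projective right `E`-module `M` is a retract of a free one, and
`E^(M) ↪ Hom_Λ(P, P^(M))`, `c ↦ (p ↦ (c_m p)_m)`, is an injective map of right `E`-modules.
So a finitely generated `N ≤ M`, generated by `n_1, …, n_k`, embeds into `Hom_Λ(P, Q)` with
`Q = P^(M)` projective over `Λ`. The images of the `n_i` span a finitely generated submodule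
`X ≤ Q` which receives a surjection `G : P^k → X`; since `Λ` is semi-hereditary, `X` is
projective, so `G` splits and `X` is a retract of `P^k`. Every element of `N` factors through
`X`, so `N ≅ Hom_Λ(P, X)`, a direct summand of `Hom_Λ(P, P^k) = E^k`.
-/

universe u

namespace Finsupp

variable {R : Type*} [Ring R] {P : Type*} [AddCommGroup P] [Module R P] {ι : Type*}

noncomputable def applyEnd : (ι →₀ (Module.End R P)ᵐᵒᵖ) →+ (P →ₗ[R] ι →₀ P) where
  toFun c :=
    { toFun p := c.mapRange (fun e ↦ e.unop p) rfl
      map_add' _ _ := by ext; simp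
      map_smul' _ _ := by ext; simp }
  map_zero' := by ext; simp
  map_add' _ _ := by ext; simp

@[simp]
theorem applyEnd_apply (c : ι →₀ (Module.End R P)ᵐᵒᵖ) (p : P) (i : ι) :
    applyEnd c p i = (c i).unop p :=
  rfl

theorem applyEnd_smul (a : (Module.End R P)ᵐᵒᵖ) (c : ι →₀ (Module.End R P)ᵐᵒᵖ) :
    applyEnd (a • c) = applyEnd c ∘ₗ a.unop := by
  ext; simp

theorem applyEnd_injective : Function.Injective (applyEnd (R := R) (P := P) (ι := ι)) :=
  fun _ _ h ↦ ext fun i ↦ MulOpposite.unop_injective <| LinearMap.ext fun p ↦ congr($h p i)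

end Finsupp

section HomEmbedding

variable {R : Type*} [Ring R] {P : Type*} [AddCommGroup P] [Module R P]
  {Q : Type*} [AddCommGroup Q] [Module R Q]
  {N : Type*} [AddCommGroup N] [Module (Module.End R P)ᵐᵒᵖ N]
  (Ψ : N →+ (P →ₗ[R] Q))
  (hΨ : ∀ (a : (Module.End R P)ᵐᵒᵖ) (x : N), Ψ (a • x) = Ψ x ∘ₗ a.unop)
include hΨ

/-- `N ≅ Hom_R(P, Q)` and `Q` is a retract of `P^ι`, so `N` is a summand of
`Hom_R(P, P^ι) = E^ι`. -/
theorem Module.Projective.of_homEmbedding_of_retract {ι : Type*} [Fintype ι] [DecidableEq ι]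
    (hinj : Function.Injective Ψ) (G : (ι → P) →ₗ[R] Q) (s : Q →ₗ[R] (ι → P))
    (hGs : G ∘ₗ s = LinearMap.id)
    (n : ι → N) (hn : ∀ i, Ψ (n i) = G ∘ₗ LinearMap.single R (fun _ ↦ P) i) :
    Module.Projective (Module.End R P)ᵐᵒᵖ N := by
  let σ : N →ₗ[(Module.End R P)ᵐᵒᵖ] (ι → (Module.End R P)ᵐᵒᵖ) :=
    { toFun x i := .op (LinearMap.proj i ∘ₗ s ∘ₗ Ψ x)
      map_add' x y := by ext i : 1; simp [LinearMap.comp_add]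
      map_smul' a x := by rw [hΨ]; rfl }
  refine .of_split σ (Fintype.linearCombination _ n) (LinearMap.ext fun x ↦ hinj ?_)
  ext p
  calc Ψ (∑ i, σ x i • n i) p = G (∑ i, Pi.single i (s (Ψ x p) i)) := by
        simp [map_sum, hΨ, hn, σ]
    _ = Ψ x p := by rw [Finset.univ_sum_single, ← LinearMap.comp_apply G s, hGs]; rfl

theorem Module.Projective.of_homEmbedding [Module.Finite R P]
    [Module.Finite (Module.End R P)ᵐᵒᵖ N] (hQ : ∀ X : Submodule R Q, X.FG → Module.Projective R X)
    (hinj : Function.Injective Ψ) : Module.Projective (Module.End R P)ᵐᵒᵖ N := by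
  obtain ⟨k, n, hn⟩ := Module.Finite.exists_fin (R := (Module.End R P)ᵐᵒᵖ) (M := N)
  let G : (Fin k → P) →ₗ[R] Q := ∑ i, Ψ (n i) ∘ₗ LinearMap.proj i
  have hrange (x : N) : LinearMap.range (Ψ x) ≤ LinearMap.range G := by
    obtain ⟨c, rfl⟩ :=
      (Submodule.mem_span_range_iff_exists_fun _).mp (hn ▸ Submodule.mem_top (x := x))
    rintro _ ⟨p, rfl⟩
    exact ⟨fun i ↦ (c i).unop p, by simp [G, map_sum, hΨ]⟩
  have : Module.Projective R (LinearMap.range G) :=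
    hQ _ (LinearMap.range_eq_map G ▸ Module.Finite.fg_top.map G)
  obtain ⟨s, hs⟩ := G.rangeRestrict.exists_rightInverse_of_surjective G.range_rangeRestrict
  let Ψ' : N →+ (P →ₗ[R] LinearMap.range G) :=
    { toFun x := (Ψ x).codRestrict _ fun p ↦ hrange x ⟨p, rfl⟩
      map_zero' := by ext; simp
      map_add' _ _ := by ext; simp }
  refine of_homEmbedding_of_retract Ψ' (fun a x ↦ ?_) (fun x y hxy ↦ hinj ?_)
    G.rangeRestrict s hs n fun i ↦ ?_
  · ext; simp [Ψ', hΨ]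
  · ext p; exact congr($hxy p)
  · ext; simp [Ψ', G, Pi.single_apply, apply_ite]

end HomEmbedding

/-- If `Λ` is right semi-hereditary, then the endomorphism ring of any finitely generated
projective right `Λ`-module is right semi-hereditary.  Right modules are formalized as
modules over the opposite ring. -/
theorem stmt19 (Λ : Type u) [Ring Λ]
    (hsh : ∀ (M : Type u) [AddCommGroup M] [Module Λᵐᵒᵖ M],
      Module.Projective Λᵐᵒᵖ M → ∀ N : Submodule Λᵐᵒᵖ M, N.FG → Module.Projective Λᵐᵒᵖ N)
    (P : Type u) [AddCommGroup P] [Module Λᵐᵒᵖ P]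
    [Module.Finite Λᵐᵒᵖ P] [Module.Projective Λᵐᵒᵖ P] :
    ∀ (M : Type u) [AddCommGroup M] [Module (Module.End Λᵐᵒᵖ P)ᵐᵒᵖ M],
      Module.Projective (Module.End Λᵐᵒᵖ P)ᵐᵒᵖ M →
      ∀ N : Submodule (Module.End Λᵐᵒᵖ P)ᵐᵒᵖ M, N.FG →
        Module.Projective (Module.End Λᵐᵒᵖ P)ᵐᵒᵖ N := by
  classical
  intro M _ _ hM N hN
  obtain ⟨j, hj⟩ := Module.projective_def.mp hM
  have : Module.Finite _ N := Module.Finite.iff_fg.mpr hN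
  have hfree : Module.Projective Λᵐᵒᵖ (M →₀ P) := .of_equiv (finsuppLequivDFinsupp _).symm
  refine .of_homEmbedding
    ((Finsupp.applyEnd.comp j.toAddMonoidHom).comp N.subtype.toAddMonoidHom)
    (fun a x ↦ ?_) (fun X hX ↦ hsh _ hfree X hX) ?_
  · simp [Finsupp.applyEnd_smul]
  · exact Finsupp.applyEnd_injective.comp (hj.injective.comp Subtype.val_injective)
end
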